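/- arXiv:1710.10408 — 9 statements merged into one kernel-verified Lean document; each statement's English description precedes it below -/
import Mathlib

section
/- Let A be a symmetric implication zroupoid such that A satisfies 0 → x = x → x for all x. Then A satisfies both: (1) 0 → (x → x) = x → x for all x, and (2) 0 → x' = 0 → x for all x. -/
/-!
Write `x'` for `x → 0`. Symmetry with `y := x'` gives `(x → x)' = (x' → x')'`, so `x' → x' = x → x`,
and hence `0 → x' = 0 → x`. Symmetry with `x := 0` then turns `0 → y` into `y → 0'`. For `y := x → x`,
expanding `(x → x) → 0'` by the defining identity `(I)` and simplifying with the above collapses it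
back to `x → x`.
-/

section SymmetricIZroupoid

variable {A : Type*} {f : A → A → A} {z : A}

theorem neg_imp_neg_eq_imp_self (hinv : ∀ x : A, f (f x z) z = x)
    (hsym : ∀ x y : A, f (f x (f y z)) z = f (f y (f x z)) z) (x : A) :
    f (f x z) (f x z) = f x x := by
  have hneg : f (f (f x z) (f x z)) z = f (f x x) z := by
    simpa only [hinv] using (hsym x (f x z)).symm
  rw [← hinv (f (f x z) (f x z)), hneg, hinv]

theorem zero_imp_neg (hinv : ∀ x : A, f (f x z) z = x)
    (hsym : ∀ x y : A, f (f x (f y z)) z = f (f y (f x z)) z)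
    (hyp : ∀ x : A, f z x = f x x) (x : A) :
    f z (f x z) = f z x := by
  rw [hyp (f x z), neg_imp_neg_eq_imp_self hinv hsym, hyp]

theorem zero_imp_eq_imp_neg_zero (hinv : ∀ x : A, f (f x z) z = x)
    (hsym : ∀ x y : A, f (f x (f y z)) z = f (f y (f x z)) z)
    (hyp : ∀ x : A, f z x = f x x) (y : A) :
    f z y = f y (f z z) := by
  rw [← zero_imp_neg hinv hsym hyp, ← hinv (f z (f y z)), hsym, hinv]

theorem imp_self_imp_neg_zero (hI : ∀ x y w : A, f (f x y) w = f (f (f (f w z) x) (f (f y w) z)) z)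
    (hI0 : f (f z z) z = z) (hinv : ∀ x : A, f (f x z) z = x)
    (hsym : ∀ x y : A, f (f x (f y z)) z = f (f y (f x z)) z)
    (hyp : ∀ x : A, f z x = f x x) (x : A) :
    f (f x x) (f z z) = f x x := by
  have hneg := neg_imp_neg_eq_imp_self hinv hsym
  calc f (f x x) (f z z)
      = f (f (f (f (f z z) z) x) (f (f x (f z z)) z)) z := hI x x (f z z)
    _ = f (f (f x x) (f (f z x) z)) z := by rw [hI0, hsym x z, hyp (f x z), hneg, hsym]
    _ = f (f (f (f x z) (f x z)) (f (f z x) z)) z := by rw [hneg]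
    _ = f (f (f x z) z) x := (hI (f x z) z x).symm
    _ = f x x := by rw [hinv]

end SymmetricIZroupoid

/-- A symmetric I-zroupoid satisfying 0 → x = x → x also satisfies
0 → (x → x) = x → x and 0 → x' = 0 → x. -/
theorem stmt_1 {A : Type*} (f : A → A → A) (z : A)
    (hI : ∀ x y w : A, f (f x y) w = f (f (f (f w z) x) (f (f y w) z)) z)
    (hI0 : f (f z z) z = z)
    (hinv : ∀ x : A, f (f x z) z = x)
    (hsym : ∀ x y : A, f (f x (f y z)) z = f (f y (f x z)) z)
    (hyp : ∀ x : A, f z x = f x x) :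
    (∀ x : A, f z (f x x) = f x x) ∧ (∀ x : A, f z (f x z) = f z x) :=
  ⟨fun x => (zero_imp_eq_imp_neg_zero hinv hsym hyp _).trans
      (imp_self_imp_neg_zero hI hI0 hinv hsym hyp x),
    zero_imp_neg hinv hsym hyp⟩
end

section
/- Let A be a symmetric implication zroupoid such that A satisfies 0 → x = x for all x. Then A satisfies the identity x → (x → x) = (x → x) → x for all x in A. -/
/-!
Write `x′` for `x → 0`. Putting `0` for the first variable of (I) and using `0 → x = x` gives
`w → (y → w)′ = (y → w)′`, hence `w → w′ = w′` and `u′ → u = u`. Symmetry yields contraposition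
`p → q = q′ → p′`. With `s = (x → x) → x`, these turn instances of (I) into `x → (x → x) = s′`,
then `(s → s)′ = s` and `s → s = s`; so `s′ = s`, which is the identity.
-/

structure IsSymmetricIZroupoid {A : Type*} (f : A → A → A) (z : A) : Prop where
  imp_imp : ∀ x y w : A, f (f x y) w = f (f (f (f w z) x) (f (f y w) z)) z
  neg_neg : ∀ x : A, f (f x z) z = x
  neg_imp_neg_comm : ∀ x y : A, f (f x (f y z)) z = f (f y (f x z)) z

namespace IsSymmetricIZroupoid

variable {A : Type*} {f : A → A → A} {z : A}

local infixr:60 " ⇒ " => f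
local notation:max x:max "′" => f x z

theorem neg_injective (H : IsSymmetricIZroupoid f z) : Function.Injective (f · z) :=
  Function.Involutive.injective H.neg_neg

theorem imp_eq_neg_imp_neg (H : IsSymmetricIZroupoid f z) (p q : A) : p ⇒ q = q′ ⇒ p′ :=
  H.neg_injective <| by simpa only [H.neg_neg] using H.neg_imp_neg_comm p q′

theorem self_imp_neg_imp (H : IsSymmetricIZroupoid f z) (h0 : ∀ x : A, z ⇒ x = x) (y w : A) :
    w ⇒ (y ⇒ w)′ = (y ⇒ w)′ := by
  have h := H.imp_imp z y w
  rw [h0, H.neg_neg] at h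
  calc w ⇒ (y ⇒ w)′ = (w ⇒ (y ⇒ w)′)′′ := (H.neg_neg _).symm
    _ = (y ⇒ w)′ := by rw [← h]

theorem self_imp_neg (H : IsSymmetricIZroupoid f z) (h0 : ∀ x : A, z ⇒ x = x) (w : A) :
    w ⇒ w′ = w′ := by
  simpa only [h0] using H.self_imp_neg_imp h0 z w

theorem neg_imp_self (H : IsSymmetricIZroupoid f z) (h0 : ∀ x : A, z ⇒ x = x) (u : A) :
    u′ ⇒ u = u := by
  simpa only [H.neg_neg] using H.self_imp_neg h0 u′

theorem imp_self_imp_neg (H : IsSymmetricIZroupoid f z) (h0 : ∀ x : A, z ⇒ x = x) (x : A) :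
    (x ⇒ x) ⇒ x′ = ((x ⇒ x) ⇒ x)′ := by
  simpa only [H.neg_neg, H.self_imp_neg h0] using H.imp_imp x x x′

theorem imp_imp_self_imp (H : IsSymmetricIZroupoid f z) (h0 : ∀ x : A, z ⇒ x = x) (x : A) :
    (x ⇒ (x ⇒ x)) ⇒ x = (x ⇒ x) ⇒ x := by
  simpa only [H.neg_imp_self h0, H.self_imp_neg_imp h0, H.neg_neg] using H.imp_imp x (x ⇒ x) x

theorem imp_imp_self (H : IsSymmetricIZroupoid f z) (h0 : ∀ x : A, z ⇒ x = x) (x : A) :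
    x ⇒ (x ⇒ x) = ((x ⇒ x) ⇒ x)′ := by
  have h := H.imp_imp (x ⇒ x) z x′
  rw [h0, H.neg_neg] at h
  rw [H.imp_eq_neg_imp_neg x (x ⇒ x), h, H.imp_imp_self_imp h0]

theorem neg_imp_self_imp (H : IsSymmetricIZroupoid f z) (h0 : ∀ x : A, z ⇒ x = x) (x : A) :
    ((x ⇒ x) ⇒ x)′ = (x ⇒ x) ⇒ x := by
  set s := (x ⇒ x) ⇒ x with hs
  have hG : x ⇒ (x ⇒ x) = s′ := H.imp_imp_self h0 x
  have hW : (x ⇒ x) ⇒ s = s := by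
    simpa only [hG, H.neg_neg] using H.self_imp_neg_imp h0 x (x ⇒ x)
  have hxs : x ⇒ s = s′ := by
    have h := H.imp_imp x (x ⇒ x) x′
    rw [H.neg_neg, H.imp_self_imp_neg h0, H.neg_neg, ← hs, hW, hG] at h
    rw [H.imp_eq_neg_imp_neg x s, h]
  have hsx : s′ ⇒ x = s := by rw [← hG]; exact H.imp_imp_self_imp h0 x
  have hss' : (s ⇒ s)′ = s := by
    simpa only [hW, hsx, hxs, H.neg_neg] using (H.imp_imp x x s).symm
  have hax : (x ⇒ x)′ ⇒ x = s := by
    have h := H.imp_imp_self h0 x′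
    rw [← H.imp_eq_neg_imp_neg x x, H.imp_self_imp_neg h0, H.neg_neg] at h
    rw [H.imp_eq_neg_imp_neg, H.neg_neg, h]
  have haa : (x ⇒ x) ⇒ (x ⇒ x) = s := by
    simpa only [hax, hG, H.neg_neg, hss'] using H.imp_imp x x (x ⇒ x)
  have hsa : s′ ⇒ (x ⇒ x) = s := by
    simpa only [hax, haa, H.self_imp_neg h0, H.neg_neg, hG] using H.imp_imp x (x ⇒ x) (x ⇒ x)
  have hss : s ⇒ s = s := by
    simpa only [hsa, hxs, H.neg_neg, hss'] using H.imp_imp (x ⇒ x) x s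
  rwa [hss] at hss'

end IsSymmetricIZroupoid

theorem stmt_3_general {A : Type*} (f : A → A → A) (z : A)
    (hI : ∀ x y w : A, f (f x y) w = f (f (f (f w z) x) (f (f y w) z)) z)
    (hinv : ∀ x : A, f (f x z) z = x)
    (hsym : ∀ x y : A, f (f x (f y z)) z = f (f y (f x z)) z)
    (hyp : ∀ x : A, f z x = x) :
    ∀ x : A, f x (f x x) = f (f x x) x := by
  intro x
  have H : IsSymmetricIZroupoid f z := ⟨hI, hinv, hsym⟩
  rw [H.imp_imp_self hyp, H.neg_imp_self_imp hyp]

/-- A symmetric I-zroupoid satisfying 0 → x = x satisfies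
x → (x → x) = (x → x) → x. -/
theorem stmt_3 {A : Type*} (f : A → A → A) (z : A)
    (hI : ∀ x y w : A, f (f x y) w = f (f (f (f w z) x) (f (f y w) z)) z)
    (hI0 : f (f z z) z = z)
    (hinv : ∀ x : A, f (f x z) z = x)
    (hsym : ∀ x y : A, f (f x (f y z)) z = f (f y (f x z)) z)
    (hyp : ∀ x : A, f z x = x) :
    ∀ x : A, f x (f x x) = f (f x x) x :=
  stmt_3_general f z hI hinv hsym hyp
end

section
/- Let A be a symmetric implication zroupoid such that A satisfies 0 → x = x for all x. Then for all x, y, z, t in A the following five terms are all equal: ((x → y) → z) → t, z → ((y → x) → t), (y → x) → (z → t), ((z → y) → x) → t, and (y → z) → (x → t). -/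
/-- In a symmetric I-zroupoid satisfying 0 → x = x, the five terms
((x → y) → z) → t, z → ((y → x) → t), (y → x) → (z → t), ((z → y) → x) → t,
and (y → z) → (x → t) are all equal. -/
theorem stmt_4 {A : Type*} (f : A → A → A) (z : A)
    (hI : ∀ x y w : A, f (f x y) w = f (f (f (f w z) x) (f (f y w) z)) z)
    (hI0 : f (f z z) z = z)
    (hinv : ∀ x : A, f (f x z) z = x)
    (hsym : ∀ x y : A, f (f x (f y z)) z = f (f y (f x z)) z)
    (hyp : ∀ x : A, f z x = x) :
    ∀ x y w t : A,
      f (f (f x y) w) t = f w (f (f y x) t) ∧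
      f (f (f x y) w) t = f (f y x) (f w t) ∧
      f (f (f x y) w) t = f (f (f w y) x) t ∧
      f (f (f x y) w) t = f (f y w) (f x t) := by
  -- L1 : y→w = (w → ((y→w)→0))→0
  have L1 : ∀ y w : A, f y w = f (f w (f (f y w) z)) z := by
    intro y w
    have h := hI z y w
    rw [hyp y, hinv w] at h
    exact h
  -- L5 : (y→w)' = w → (y→w)'
  have L5 : ∀ y w : A, f (f y w) z = f w (f (f y w) z) := by
    intro y w
    conv_lhs => rw [L1 y w]
    rw [hinv]
  -- E1 : w → w' = w'
  have E1 : ∀ w : A, f w (f w z) = f w z := by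
    intro w
    have h := L5 z w
    rw [hyp w] at h
    exact h.symm
  -- E2 : w' → w = w
  have E2 : ∀ w : A, f (f w z) w = w := by
    intro w
    have h := E1 (f w z)
    rw [hinv w] at h
    exact h
  -- E3 : (x→y)→x = y→x
  have E3 : ∀ x y : A, f (f x y) x = f y x := by
    intro x y
    have h := hI x y x
    rw [E2 x] at h
    rw [h, ← L1 y x]
  -- I' : ((x→y)→w)' = (w'→x) → (y→w)'
  have I' : ∀ x y w : A, f (f (f x y) w) z = f (f (f w z) x) (f (f y w) z) := by
    intro x y w
    rw [hI x y w, hinv]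
  -- E7' : (x'→w)' = x → w'
  have E7' : ∀ x w : A, f (f (f x z) w) z = f x (f w z) := by
    intro x w
    have h := I' x z w
    rw [hyp w] at h
    -- h : f (f (f x z) w) z = f (f (f w z) x) (f w z)
    rw [h, E3 (f w z) x]
  -- E9 : (x→w)' = x' → w'
  have E9 : ∀ x w : A, f (f x w) z = f (f x z) (f w z) := by
    intro x w
    have h := E7' (f x z) w
    rw [hinv x] at h
    exact h
  -- E10 : x' → y = y' → x
  have E10 : ∀ x y : A, f (f x z) y = f (f y z) x := by
    intro x y
    have h := hsym x y
    rw [E9 x (f y z), E9 y (f x z), hinv y, hinv x] at h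
    exact h
  -- E22 : x → y = y' → x'
  have E22 : ∀ x y : A, f x y = f (f y z) (f x z) := by
    intro x y
    have h := E10 (f x z) y
    rw [hinv x] at h
    exact h
  -- E11 : (x→y)' = y → x
  have E11 : ∀ x y : A, f (f x y) z = f y x := by
    intro x y
    rw [E9 x y, ← E22 y x]
  -- E17 : w → (w→y) = w→y
  have E17 : ∀ w y : A, f w (f w y) = f w y := by
    intro w y
    have h := L5 y w
    rw [E11 y w] at h
    exact h.symm
  -- E25' : w → (x→y) = (w'→x) → (w→y)
  have E25' : ∀ w x y : A, f w (f x y) = f (f (f w z) x) (f w y) := by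
    intro w x y
    have h := I' x y w
    rw [E11 (f x y) w, E11 y w] at h
    exact h
  -- E26 : (a→b)→c = (c→b) → (c'→a)
  have E26 : ∀ a b c : A, f (f a b) c = f (f c b) (f (f c z) a) := by
    intro a b c
    rw [E22 (f a b) c, E11 a b, E25' (f c z) b a, hinv c]
  -- E27 : (w→x) → x' = x → w
  have E27 : ∀ x w : A, f (f w x) (f x z) = f x w := by
    intro x w
    rw [E26 w x (f x z), E2 x, hinv x, E17 x w]
  -- LE : x → (y→w) = y → (x→w)
  have LE : ∀ x y w : A, f x (f y w) = f y (f x w) := by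
    intro x y w
    calc f x (f y w) = f (f (f y w) z) (f x z) := E22 x (f y w)
      _ = f (f w y) (f x z) := by rw [E11 y w]
      _ = f (f (f x z) y) (f (f (f x z) z) w) := E26 w y (f x z)
      _ = f (f (f x z) y) (f x w) := by rw [hinv x]
      _ = f (f (f x w) y) (f (f (f x w) z) (f x z)) := E26 (f x z) y (f x w)
      _ = f (f (f x w) y) (f (f w x) (f x z)) := by rw [E11 x w]
      _ = f (f (f x w) y) (f x w) := by rw [E27 x w]
      _ = f y (f x w) := E3 (f x w) y
  -- SW : (x→y)→w = (w→y)→x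
  have SW : ∀ x y w : A, f (f x y) w = f (f w y) x := by
    intro x y w
    calc f (f x y) w = f (f w z) (f (f x y) z) := E22 (f x y) w
      _ = f (f w z) (f y x) := by rw [E11 x y]
      _ = f (f w z) (f (f x z) (f y z)) := by rw [← E22 y x]
      _ = f (f x z) (f (f w z) (f y z)) := LE (f w z) (f x z) (f y z)
      _ = f (f x z) (f y w) := by rw [← E22 y w]
      _ = f (f x z) (f (f w y) z) := by rw [E11 w y]
      _ = f (f w y) x := (E22 (f w y) x).symm
  -- medial : (a→b)→(c→d) = (a→c)→(b→d)
  have medial : ∀ a b c d : A, f (f a b) (f c d) = f (f a c) (f b d) := by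
    intro a b c d
    calc f (f a b) (f c d) = f c (f (f a b) d) := LE (f a b) c d
      _ = f c (f (f d b) a) := by rw [SW a b d]
      _ = f (f d b) (f c a) := LE c (f d b) a
      _ = f (f (f c a) z) (f (f d b) z) := E22 (f d b) (f c a)
      _ = f (f a c) (f b d) := by rw [E11 c a, E11 d b]
  intro x y w t
  have G1 : f (f (f x y) w) t = f w (f (f y x) t) := by
    calc f (f (f x y) w) t = f (f t z) (f (f (f x y) w) z) := E22 _ t
      _ = f (f t z) (f w (f x y)) := by rw [E11 (f x y) w]
      _ = f w (f (f t z) (f x y)) := LE (f t z) w (f x y)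
      _ = f w (f (f t z) (f (f y x) z)) := by rw [E11 y x]
      _ = f w (f (f y x) t) := by rw [← E22 (f y x) t]
  refine ⟨G1, ?_, ?_, ?_⟩
  · rw [G1, LE w (f y x) t]
  · rw [SW x y w]
  · rw [G1, LE w (f y x) t, medial y x w t]
end

section
/- Let A be a symmetric implication zroupoid such that A satisfies 0 → x = x for all x. Then A satisfies the identity x → ((x → x) → y) = (x → (x → x)) → y for all x, y in A. -/
/-- A symmetric I-zroupoid satisfying 0 → x = x satisfies
x → ((x → x) → y) = (x → (x → x)) → y. -/
theorem stmt_5 {A : Type*} (f : A → A → A) (z : A)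
    (hI : ∀ x y w : A, f (f x y) w = f (f (f (f w z) x) (f (f y w) z)) z)
    (hI0 : f (f z z) z = z)
    (hinv : ∀ x : A, f (f x z) z = x)
    (hsym : ∀ x y : A, f (f x (f y z)) z = f (f y (f x z)) z)
    (hyp : ∀ x : A, f z x = x) :
    ∀ x y : A, f x (f (f x x) y) = f (f x (f x x)) y := by
  have hz : f z z = z := hyp z
  -- L1 : w → w' = w'
  have L1 : ∀ w, f w (f w z) = f w z := by
    intro w
    have h := hI z z w
    rw [hz] at h
    rw [hyp w] at h
    rw [hinv w] at h
    calc f w (f w z) = f (f (f w (f w z)) z) z := (hinv _).symm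
      _ = f w z := by rw [← h]
  -- C : contraposition  x → y = y' → x'
  have C : ∀ a b, f a b = f (f b z) (f a z) := by
    intro a b
    have h := hsym a (f b z)
    rw [hinv b] at h
    calc f a b = f (f (f a b) z) z := (hinv _).symm
      _ = f (f (f (f b z) (f a z)) z) z := by rw [h]
      _ = f (f b z) (f a z) := hinv _
  -- N2 : (w → x) → w = x → w
  have N2 : ∀ w x, f (f w x) w = f x w := by
    intro w x
    have h := hI (f (f w z) z) x w
    rw [L1 (f w z)] at h
    have h2 := hI z x w
    rw [hyp x] at h2
    have h3 := h.trans h2.symm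
    rw [hinv w] at h3
    exact h3
  -- E2 : y → w = (w → (y → w)')'
  have E2 : ∀ y w, f y w = f (f w (f (f y w) z)) z := by
    intro y w
    have h := hI z y w
    rw [hinv w] at h
    rw [hyp y] at h
    exact h
  -- E3 : w → (y → w)' = (y → w)'
  have E3 : ∀ y w, f w (f (f y w) z) = f (f y w) z := by
    intro y w
    calc f w (f (f y w) z) = f (f (f w (f (f y w) z)) z) z := (hinv _).symm
      _ = f (f y w) z := by rw [← E2 y w]
  -- E6p : (x → w) → w' = (x → w)'
  have E6p : ∀ x w, f (f x w) (f w z) = f (f x w) z := by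
    intro x w
    calc f (f x w) (f w z) = f (f (f w z) z) (f (f x w) z) := C (f x w) (f w z)
      _ = f w (f (f x w) z) := by rw [hinv w]
      _ = f (f x w) z := E3 x w
  -- T5 : u → (u → v) = u → v
  have T5 : ∀ u v, f u (f u v) = f u v := by
    intro u v
    calc f u (f u v) = f (f (f u v) z) (f u z) := C u (f u v)
      _ = f (f (f u z) (f (f u v) z)) (f u z) := (N2 (f u z) (f (f u v) z)).symm
      _ = f (f (f u v) u) (f u z) := by rw [C (f u v) u]
      _ = f (f v u) (f u z) := by rw [N2 u v]
      _ = f (f (f u z) (f v z)) (f u z) := by rw [C v u]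
      _ = f (f v z) (f u z) := N2 (f u z) (f v z)
      _ = f u v := (C u v).symm
  -- aprime : (x → x)' = x → x
  have aprime : ∀ x, f (f x x) z = f x x := by
    intro x
    calc f (f x x) z = f (f (f x z) (f x z)) z := by rw [C x x]
      _ = f (f (f (f x z) (f x z)) (f x z)) z := by rw [N2 (f x z) (f x z)]
      _ = f (f (f x x) (f x z)) z := by rw [C x x]
      _ = f (f x (f (f x x) z)) z := (hsym x (f x x)).symm
      _ = f (f (f z x) (f (f x x) z)) z := by rw [hyp x]
      _ = f (f (f (f x z) x) (f (f x x) z)) z := by rw [N2 x z]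
      _ = f (f x x) x := (hI x x x).symm
      _ = f x x := N2 x x
  -- xa : x → (x → x) = x → x
  have xa : ∀ x, f x (f x x) = f x x := by
    intro x
    calc f x (f x x) = f (f (f x x) x) (f x x) := (N2 (f x x) x).symm
      _ = f (f x x) (f x x) := by rw [N2 x x]
      _ = f (f (f x x) z) (f x x) := by rw [aprime x]
      _ = f z (f x x) := N2 (f x x) z
      _ = f x x := hyp _
  -- L19 : (y → x) → ((x → x) → y) = (x → x) → y
  have L19 : ∀ x y, f (f y x) (f (f x x) y) = f (f x x) y := by
    intro x y
    calc f (f y x) (f (f x x) y)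
        = f (f (f x z) (f y z)) (f (f x x) y) := by rw [C y x]
      _ = f (f (f (f y z) (f x z)) (f y z)) (f (f x x) y) := by rw [N2 (f y z) (f x z)]
      _ = f (f (f x y) (f y z)) (f (f x x) y) := by rw [C x y]
      _ = f (f (f x y) z) (f (f x x) y) := by rw [E6p x y]
      _ = f (f (f x y) z) (f (f (f (f y z) x) (f (f x y) z)) z) := by rw [hI x x y]
      _ = f (f (f (f y z) x) (f (f x y) z)) z := E3 (f (f y z) x) (f (f x y) z)
      _ = f (f x x) y := (hI x x y).symm
  intro x y
  have T3 : f x (f (f x x) y) = f (f x x) y := by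
    calc f x (f (f x x) y)
        = f (f (f (f x x) y) z) (f x z) := C x (f (f x x) y)
      _ = f (f (f (f (f (f y z) x) (f (f x y) z)) z) z) (f x z) := by rw [hI x x y]
      _ = f (f (f (f y z) x) (f (f x y) z)) (f x z) := by
            rw [hinv (f (f (f y z) x) (f (f x y) z))]
      _ = f (f (f (f (f x z) z) (f (f y z) x)) (f (f (f (f x y) z) (f x z)) z)) z :=
            hI (f (f y z) x) (f (f x y) z) (f x z)
      _ = f (f (f x (f (f y z) x)) (f (f (f (f x y) z) (f x z)) z)) z := by rw [hinv x]
      _ = f (f (f x (f (f y z) x)) (f (f x (f x y)) z)) z := by rw [C x (f x y)]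
      _ = f (f (f x (f (f y z) x)) (f (f x y) z)) z := by rw [T5 x y]
      _ = f (f (f (f (f (f (f x y) z) z) x) (f (f (f (f y z) x) (f (f x y) z)) z)) z) z := by
            rw [hI x (f (f y z) x) (f (f x y) z)]
      _ = f (f (f (f (f x y) x) (f (f (f (f y z) x) (f (f x y) z)) z)) z) z := by
            rw [hinv (f x y)]
      _ = f (f (f (f y x) (f (f (f (f y z) x) (f (f x y) z)) z)) z) z := by rw [N2 x y]
      _ = f (f (f (f y x) (f (f x x) y)) z) z := by rw [hI x x y]
      _ = f (f (f (f x x) y) z) z := by rw [L19 x y]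
      _ = f (f x x) y := hinv _
  rw [xa x]
  exact T3
end

section
/- Let A be a symmetric implication zroupoid. Then the following conditions are equivalent: (a) A satisfies the left-alternative law x → (x → y) = (x → x) → y for all x, y; (b) A satisfies the flexible law x → (y → x) = (x → y) → x for all x, y; (c) A satisfies the right-alternative law x → (y → y) = (x → y) → y for all x, y; (d) A satisfies x' = x and x → y = y → x for all x, y (i.e., A belongs to the variety SL). In other words, relative to S, the varieties FLEX, RALT, LALT, and SL coincide. -/
section auxx
theorem aux_lalt {A : Type*} (f : A → A → A) (z : A)
    (hI : ∀ x y w : A, f (f x y) w = f (f (f (f w z) x) (f (f y w) z)) z)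
    (hinv : ∀ x : A, f (f x z) z = x)
    (hsym : ∀ x y : A, f (f x (f y z)) z = f (f y (f x z)) z)
    (hL : ∀ x y : A, f x (f x y) = f (f x x) y) :
    (∀ x : A, f x z = x) ∧ (∀ x y : A, f x y = f y x) := by
  have e0 : ∀ v0 : A, (f (f v0 z) z) = v0 := fun v0 => (hinv v0)
  have e1 : ∀ v0 v1 : A, (f (f v0 v0) v1) = (f v0 (f v0 v1)) := fun v0 v1 => (Eq.symm (hL v0 v1))
  have e2 : (f z (f z z)) = z := (Eq.trans (Eq.symm (e1 z z)) (e0 z))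
  have e3 : ∀ v0 : A, (f (f v0 (f v0 z)) z) = (f v0 v0) := fun v0 => (Eq.trans (congrArg (fun _h => (f _h z)) (Eq.symm (e1 v0 z))) (e0 (f v0 v0)))
  have e4 : ∀ v0 v1 : A, (f (f v0 (f v1 z)) z) = (f (f v1 (f v0 z)) z) := fun v0 v1 => (hsym v0 v1)
  have e7 : ∀ v0 v1 : A, (f v0 (f v1 z)) = (f v1 (f v0 z)) := fun v0 v1 => (Eq.trans (Eq.symm (e0 (f v0 (f v1 z)))) (Eq.trans (congrArg (fun _h => (f _h z)) (e4 v0 v1)) (e0 (f v1 (f v0 z)))))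
  have e8 : ∀ v0 v1 : A, (f (f v0 z) (f v1 z)) = (f v1 v0) := fun v0 v1 => (Eq.trans (Eq.symm (e7 v1 (f v0 z))) (congrArg (fun _h => (f v1 _h)) (e0 v0)))
  have e9 : ∀ v0 v1 : A, (f (f v0 z) v1) = (f (f v1 z) v0) := fun v0 v1 => (Eq.trans (Eq.symm (e8 v1 (f v0 z))) (congrArg (fun _h => (f (f v1 z) _h)) (e0 v0)))
  have e10 : ∀ v0 : A, (f z (f z v0)) = v0 := fun v0 => (Eq.trans (Eq.symm (e1 z v0)) (Eq.trans (Eq.symm (e9 v0 z)) (e0 v0)))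
  have e28 : ∀ v0 v1 v2 : A, (f (f (f (f v0 z) v1) (f (f v2 v0) z)) z) = (f (f v1 v2) v0) := fun v0 v1 v2 => (Eq.symm (hI v1 v2 v0))
  have e29 : ∀ v0 v1 : A, (f (f v0 (f (f v1 v0) z)) z) = (f (f z v1) v0) := fun v0 v1 => (Eq.trans (congrArg (fun _h => (f (f _h (f (f v1 v0) z)) z)) (Eq.symm (e0 v0))) (e28 v0 z v1))
  have e30 : ∀ v0 v1 : A, (f v0 (f (f v1 v0) z)) = (f (f (f z v1) v0) z) := fun v0 v1 => (Eq.trans (Eq.symm (e0 (f v0 (f (f v1 v0) z)))) (congrArg (fun _h => (f _h z)) (e29 v0 v1)))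
  have e33 : ∀ v0 : A, (f v0 (f (f z v0) z)) = (f v0 z) := fun v0 => (Eq.trans (e30 v0 z) (Eq.trans (congrArg (fun _h => (f _h z)) (e1 z v0)) (congrArg (fun _h => (f _h z)) (e10 v0))))
  have e34 : (f z z) = z := (Eq.trans (Eq.symm (e10 (f z z))) (Eq.trans (Eq.symm (e1 z (f z z))) (Eq.trans (congrArg (fun _h => (f (f z z) (f _h z))) (Eq.symm (e2))) (Eq.trans (e33 (f z z)) (e0 z)))))
  have e35 : ∀ v0 : A, (f z v0) = v0 := fun v0 => (Eq.trans (congrArg (fun _h => (f _h v0)) (Eq.symm (e34))) (Eq.trans (e1 z v0) (e10 v0)))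
  have e36 : ∀ v0 : A, (f v0 (f v0 z)) = (f v0 z) := fun v0 => (Eq.trans (congrArg (fun _h => (f v0 (f _h z))) (Eq.symm (e35 v0))) (e33 v0))
  have e37 : ∀ v0 : A, (f v0 v0) = v0 := fun v0 => (Eq.trans (Eq.symm (e3 v0)) (Eq.trans (congrArg (fun _h => (f _h z)) (e36 v0)) (e0 v0)))
  have e38 : ∀ v0 : A, (f v0 z) = v0 := fun v0 => (Eq.trans (Eq.symm (e37 (f v0 z))) (Eq.trans (e8 v0 v0) (e37 v0)))
  have e40 : ∀ v0 v1 : A, (f v0 v1) = (f v1 v0) := fun v0 v1 => (Eq.trans (congrArg (fun _h => (f v0 _h)) (Eq.symm (e38 v1))) (Eq.trans (Eq.symm (e7 v1 v0)) (congrArg (fun _h => (f v1 _h)) (e38 v0))))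
  exact ⟨fun x => e38 x, fun x y => e40 x y⟩

theorem aux_flex {A : Type*} (f : A → A → A) (z : A)
    (hI : ∀ x y w : A, f (f x y) w = f (f (f (f w z) x) (f (f y w) z)) z)
    (hinv : ∀ x : A, f (f x z) z = x)
    (hsym : ∀ x y : A, f (f x (f y z)) z = f (f y (f x z)) z)
    (hL : ∀ x y : A, f x (f y x) = f (f x y) x) :
    (∀ x : A, f x z = x) ∧ (∀ x y : A, f x y = f y x) := by
  have e0 : ∀ v0 : A, (f (f v0 z) z) = v0 := fun v0 => (hinv v0)
  have e1 : ∀ v0 v1 : A, (f (f v0 v1) v0) = (f v0 (f v1 v0)) := fun v0 v1 => (Eq.symm (hL v0 v1))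
  have e3 : ∀ v0 v1 : A, (f (f v0 (f v1 z)) z) = (f (f v1 (f v0 z)) z) := fun v0 v1 => (hsym v0 v1)
  have e6 : ∀ v0 v1 : A, (f v0 (f v1 z)) = (f v1 (f v0 z)) := fun v0 v1 => (Eq.trans (Eq.symm (e0 (f v0 (f v1 z)))) (Eq.trans (congrArg (fun _h => (f _h z)) (e3 v0 v1)) (e0 (f v1 (f v0 z)))))
  have e7 : ∀ v0 v1 : A, (f (f v0 z) (f v1 z)) = (f v1 v0) := fun v0 v1 => (Eq.trans (Eq.symm (e6 v1 (f v0 z))) (congrArg (fun _h => (f v1 _h)) (e0 v0)))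
  have e8 : ∀ v0 v1 : A, (f (f v0 z) v1) = (f (f v1 z) v0) := fun v0 v1 => (Eq.trans (Eq.symm (e7 v1 (f v0 z))) (congrArg (fun _h => (f (f v1 z) _h)) (e0 v0)))
  have e9 : ∀ v0 : A, (f (f z z) v0) = v0 := fun v0 => (Eq.trans (Eq.symm (e8 v0 z)) (e0 v0))
  have e14 : ∀ v0 v1 : A, (f (f v0 (f v1 z)) v1) = (f v1 (f (f v0 z) v1)) := fun v0 v1 => (Eq.trans (congrArg (fun _h => (f _h v1)) (Eq.symm (e6 v1 v0))) (e1 v1 (f v0 z)))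
  have e19 : ∀ v0 v1 : A, (f (f v0 z) (f z v1)) = (f (f z (f v1 z)) v0) := fun v0 v1 => (Eq.trans (Eq.symm (e8 (f z v1) v0)) (congrArg (fun _h => (f _h v0)) (e1 z v1)))
  have e24 : ∀ v0 : A, (f (f v0 z) (f z v0)) = (f v0 v0) := fun v0 => (Eq.trans (e19 v0 v0) (Eq.trans (e14 z v0) (congrArg (fun _h => (f v0 _h)) (e9 v0))))
  have e28 : ∀ v0 : A, (f v0 (f z (f v0 z))) = (f v0 v0) := fun v0 => (Eq.trans (congrArg (fun _h => (f _h (f z (f v0 z)))) (Eq.symm (e0 v0))) (Eq.trans (e24 (f v0 z)) (Eq.trans (e6 (f v0 z) v0) (congrArg (fun _h => (f v0 _h)) (e0 v0)))))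
  have e30 : ∀ v0 v1 v2 : A, (f (f (f (f v0 z) v1) (f (f v2 v0) z)) z) = (f (f v1 v2) v0) := fun v0 v1 v2 => (Eq.symm (hI v1 v2 v0))
  have e31 : ∀ v0 v1 : A, (f (f v0 (f (f v1 v0) z)) z) = (f (f z v1) v0) := fun v0 v1 => (Eq.trans (congrArg (fun _h => (f (f _h (f (f v1 v0) z)) z)) (Eq.symm (e0 v0))) (e30 v0 z v1))
  have e32 : ∀ v0 v1 : A, (f v0 (f (f v1 v0) z)) = (f (f (f z v1) v0) z) := fun v0 v1 => (Eq.trans (Eq.symm (e0 (f v0 (f (f v1 v0) z)))) (congrArg (fun _h => (f _h z)) (e31 v0 v1)))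
  have e33 : ∀ v0 : A, (f v0 v0) = (f v0 z) := fun v0 => (Eq.trans (Eq.symm (e28 v0)) (Eq.trans (congrArg (fun _h => (f v0 _h)) (Eq.symm (e1 z v0))) (Eq.trans (e32 v0 z) (congrArg (fun _h => (f _h z)) (e9 v0)))))
  have e35 : ∀ v0 : A, (f v0 v0) = v0 := fun v0 => (Eq.trans (congrArg (fun _h => (f v0 _h)) (Eq.symm (e0 v0))) (Eq.trans (Eq.symm (e6 (f v0 z) v0)) (Eq.trans (e33 (f v0 z)) (e0 v0))))
  have e37 : ∀ v0 : A, (f v0 z) = v0 := fun v0 => (Eq.trans (Eq.symm (e33 v0)) (e35 v0))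
  have e38 : ∀ v0 v1 : A, (f v0 v1) = (f v1 v0) := fun v0 v1 => (Eq.trans (congrArg (fun _h => (f v0 _h)) (Eq.symm (e37 v1))) (Eq.trans (Eq.symm (e6 v1 v0)) (congrArg (fun _h => (f v1 _h)) (e37 v0))))
  exact ⟨fun x => e37 x, fun x y => e38 x y⟩

theorem aux_ralt {A : Type*} (f : A → A → A) (z : A)
    (hI : ∀ x y w : A, f (f x y) w = f (f (f (f w z) x) (f (f y w) z)) z)
    (hinv : ∀ x : A, f (f x z) z = x)
    (hsym : ∀ x y : A, f (f x (f y z)) z = f (f y (f x z)) z)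
    (hL : ∀ x y : A, f x (f y y) = f (f x y) y) :
    (∀ x : A, f x z = x) ∧ (∀ x y : A, f x y = f y x) := by
  have e0 : ∀ v0 : A, (f (f v0 z) z) = v0 := fun v0 => (hinv v0)
  have e1 : ∀ v0 v1 : A, (f (f v0 v1) v1) = (f v0 (f v1 v1)) := fun v0 v1 => (Eq.symm (hL v0 v1))
  have e2 : ∀ v0 : A, (f v0 (f z z)) = v0 := fun v0 => (Eq.trans (Eq.symm (e1 v0 z)) (e0 v0))
  have e3 : ∀ v0 v1 : A, (f (f v0 (f v1 z)) z) = (f (f v1 (f v0 z)) z) := fun v0 v1 => (hsym v0 v1)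
  have e4 : ∀ v0 : A, (f (f z (f v0 z)) z) = (f v0 z) := fun v0 => (Eq.trans (Eq.symm (e3 v0 z)) (congrArg (fun _h => (f _h z)) (e2 v0)))
  have e5 : ∀ v0 : A, (f (f z v0) z) = v0 := fun v0 => (Eq.trans (congrArg (fun _h => (f (f z _h) z)) (Eq.symm (e0 v0))) (Eq.trans (e4 (f v0 z)) (e0 v0)))
  have e6 : ∀ v0 : A, (f z v0) = (f v0 z) := fun v0 => (Eq.trans (Eq.symm (e0 (f z v0))) (congrArg (fun _h => (f _h z)) (e5 v0)))
  have e8 : ∀ v0 : A, (f z (f z v0)) = v0 := fun v0 => (Eq.trans (e6 (f z v0)) (e5 v0))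
  have e12 : ∀ v0 v1 : A, (f v0 (f v1 z)) = (f v1 (f v0 z)) := fun v0 v1 => (Eq.trans (Eq.symm (e0 (f v0 (f v1 z)))) (Eq.trans (congrArg (fun _h => (f _h z)) (e3 v0 v1)) (e0 (f v1 (f v0 z)))))
  have e13 : ∀ v0 v1 : A, (f (f v0 z) (f v1 z)) = (f v1 v0) := fun v0 v1 => (Eq.trans (Eq.symm (e12 v1 (f v0 z))) (congrArg (fun _h => (f v1 _h)) (e0 v0)))
  have e15 : ∀ v0 v1 : A, (f v0 (f v1 z)) = (f v1 (f z v0)) := fun v0 v1 => (Eq.trans (Eq.symm (e12 v1 v0)) (congrArg (fun _h => (f v1 _h)) (Eq.symm (e6 v0))))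
  have e16 : ∀ v0 v1 : A, (f (f v0 z) v1) = (f (f v1 z) v0) := fun v0 v1 => (Eq.trans (Eq.symm (e13 v1 (f v0 z))) (congrArg (fun _h => (f (f v1 z) _h)) (e0 v0)))
  have e17 : ∀ v0 : A, (f (f z z) v0) = v0 := fun v0 => (Eq.trans (Eq.symm (e16 v0 z)) (e0 v0))
  have e35 : ∀ v0 v1 : A, (f z (f v0 (f v1 z))) = (f z (f v0 (f z v1))) := fun v0 v1 => (Eq.trans (e6 (f v0 (f v1 z))) (Eq.trans (Eq.symm (e3 v1 v0)) (Eq.trans (congrArg (fun _h => (f _h z)) (e15 v1 v0)) (Eq.symm (e6 (f v0 (f z v1)))))))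
  have e71 : ∀ v0 v1 v2 : A, (f z (f (f (f v0 z) v1) (f z (f v2 v0)))) = (f (f v1 v2) v0) := fun v0 v1 v2 => (Eq.trans (Eq.symm (e35 (f (f v0 z) v1) (f v2 v0))) (Eq.trans (e6 (f (f (f v0 z) v1) (f (f v2 v0) z))) (Eq.symm (hI v1 v2 v0))))
  have e72 : ∀ v0 v1 : A, (f z (f v0 (f z (f v1 v0)))) = (f (f z v1) v0) := fun v0 v1 => (Eq.trans (congrArg (fun _h => (f z (f _h (f z (f v1 v0))))) (Eq.symm (e0 v0))) (e71 v0 z v1))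
  have e73 : ∀ v0 : A, (f z (f v0 v0)) = v0 := fun v0 => (Eq.trans (congrArg (fun _h => (f z (f v0 _h))) (Eq.symm (e8 v0))) (Eq.trans (e72 v0 z) (e17 v0)))
  have e79 : (f z z) = z := (Eq.trans (Eq.symm (e73 (f z z))) (Eq.trans (congrArg (fun _h => (f z _h)) (e2 (f z z))) (e2 z)))
  have e80 : ∀ v0 : A, (f v0 z) = v0 := fun v0 => (Eq.trans (congrArg (fun _h => (f v0 _h)) (Eq.symm (e79))) (e2 v0))
  have e83 : ∀ v0 v1 : A, (f v0 v1) = (f v1 v0) := fun v0 v1 => (Eq.trans (congrArg (fun _h => (f v0 _h)) (Eq.symm (e80 v1))) (Eq.trans (Eq.symm (e12 v1 v0)) (congrArg (fun _h => (f v1 _h)) (e80 v0))))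
  exact ⟨fun x => e80 x, fun x y => e83 x y⟩

theorem aux_easy {A : Type*} (f : A → A → A) (z : A)
    (hI : ∀ x y w : A, f (f x y) w = f (f (f (f w z) x) (f (f y w) z)) z)
    (hid : ∀ x : A, f x z = x) (hcomm : ∀ x y : A, f x y = f y x) :
    (∀ x y : A, f x (f x y) = f (f x x) y) ∧
    (∀ x y : A, f x (f y x) = f (f x y) x) ∧
    (∀ x y : A, f x (f y y) = f (f x y) y) := by
  have hdist : ∀ x y w : A, f (f x y) w = f (f w x) (f y w) := by
    intro x y w
    rw [hI, hid, hid, hid]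
  have habs : ∀ y w : A, f w (f y w) = f y w := by
    intro y w
    have h := hdist z y w
    rw [hid] at h
    rw [hcomm z y, hid] at h
    exact h.symm
  have hidem : ∀ w : A, f w w = w := by
    intro w
    have h := habs z w
    rw [hcomm z w, hid] at h
    exact h
  refine ⟨fun x y => ?_, fun x y => ?_, fun x y => ?_⟩
  · rw [hidem, hcomm x y]
    exact habs y x
  · rw [hdist x y x, hidem]
  · rw [hidem y, hcomm (f x y) y]
    exact (habs x y).symm

end auxx

/-- In a symmetric I-zroupoid, the left-alternative law, the flexible law,
the right-alternative law, and membership in SL (x' = x and commutativity) are all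
equivalent. -/
theorem stmt_7 {A : Type*} (f : A → A → A) (z : A)
    (hI : ∀ x y w : A, f (f x y) w = f (f (f (f w z) x) (f (f y w) z)) z)
    (hI0 : f (f z z) z = z)
    (hinv : ∀ x : A, f (f x z) z = x)
    (hsym : ∀ x y : A, f (f x (f y z)) z = f (f y (f x z)) z) :
    ((∀ x y : A, f x (f x y) = f (f x x) y) ↔
      ((∀ x : A, f x z = x) ∧ (∀ x y : A, f x y = f y x))) ∧
    ((∀ x y : A, f x (f y x) = f (f x y) x) ↔
      ((∀ x : A, f x z = x) ∧ (∀ x y : A, f x y = f y x))) ∧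
    ((∀ x y : A, f x (f y y) = f (f x y) y) ↔
      ((∀ x : A, f x z = x) ∧ (∀ x y : A, f x y = f y x))) := by
  refine ⟨⟨fun h => aux_lalt f z hI hinv hsym h, fun h => (aux_easy f z hI h.1 h.2).1⟩,
    ⟨fun h => aux_flex f z hI hinv hsym h, fun h => (aux_easy f z hI h.1 h.2).2.1⟩,
    ⟨fun h => aux_ralt f z hI hinv hsym h, fun h => (aux_easy f z hI h.1 h.2).2.2⟩⟩
end

section
/- Let A be a symmetric implication zroupoid. Then A satisfies the associative law x → (y → z) = (x → y) → z for all x, y, z if and only if A satisfies x' = x and x → y = y → x for all x, y (i.e., relative to S, the variety 33A12 defined by associativity equals SL). -/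
/-- A symmetric I-zroupoid is associative iff it belongs to SL
(x' = x and commutativity). -/
theorem stmt_8 {A : Type*} (f : A → A → A) (z : A)
    (hI : ∀ x y w : A, f (f x y) w = f (f (f (f w z) x) (f (f y w) z)) z)
    (hI0 : f (f z z) z = z)
    (hinv : ∀ x : A, f (f x z) z = x)
    (hsym : ∀ x y : A, f (f x (f y z)) z = f (f y (f x z)) z) :
    (∀ x y w : A, f x (f y w) = f (f x y) w) ↔
      ((∀ x : A, f x z = x) ∧ (∀ x y : A, f x y = f y x)) := by
  constructor
  · intro h
    -- simplified form of hI using associativity and hinv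
    have hC : ∀ x y w : A, f (f x y) w = f (f (f w z) x) (f y w) := by
      intro x y w
      rw [hI x y w, ← h (f (f w z) x) (f (f y w) z) z, hinv (f y w)]
    -- f x (f z z) = x
    have hA : ∀ x : A, f x (f z z) = x := by
      intro x
      rw [h x z z, hinv]
    -- f (f z z) x = x
    have hE : ∀ x : A, f (f z z) x = x := by
      intro x
      have := hC x z z
      rw [hinv x, hA (f (f z z) x)] at this
      exact this.symm
    -- z is a left identity
    have hzl : ∀ y : A, f z y = y := by
      intro y
      have := hC z y (f z z)
      rw [hinv (f z z), hA (f z y), hA y, hE y] at this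
      exact this
    have hzz : f z z = z := hzl z
    have hP : ∀ x : A, f x z = x := by
      intro x
      have := hA x
      rwa [hzz] at this
    refine ⟨hP, fun x y => ?_⟩
    have := hsym x y
    rwa [hP y, hP x, hP (f x y), hP (f y x)] at this
  · rintro ⟨hP, hc⟩
    -- hI simplifies since primes vanish
    have hIs : ∀ x y w : A, f (f x y) w = f (f w x) (f y w) := by
      intro x y w
      rw [hI x y w, hP w, hP (f y w), hP (f (f w x) (f y w))]
    -- right self-distributivity
    have hD : ∀ x y w : A, f (f x y) w = f (f x w) (f y w) := by
      intro x y w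
      rw [hIs x y w, hc w x]
    -- absorption
    have hAbs : ∀ x w : A, f (f x w) w = f x w := by
      intro x w
      have := hD x z w
      rw [hP x, hc z w, hP w] at this
      exact this.symm
    -- idempotence
    have hId : ∀ x : A, f x x = x := by
      intro x
      have := hAbs z x
      rwa [hc z x, hP x] at this
    -- f (f x y) x = f x y
    have hlow : ∀ x y : A, f (f x y) x = f x y := by
      intro x y
      rw [hc x y, hAbs y x, hc y x]
    -- transitivity of the order
    have htrans : ∀ x y w : A, f x y = x → f y w = y → f x w = x := by
      intro x y w h1 h2
      calc f x w = f (f x y) w := by rw [h1]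
        _ = f (f x w) (f y w) := hD x y w
        _ = f (f x w) y := by rw [h2]
        _ = f (f x y) (f w y) := hD x w y
        _ = x := by rw [h1, hc w y, h2, h1]
    -- greatest lower bound property
    have hglb : ∀ t x y : A, f t x = t → f t y = t → f t (f x y) = t := by
      intro t x y h1 h2
      calc f t (f x y) = f (f x y) t := hc _ _
        _ = f (f x t) (f y t) := hD x y t
        _ = t := by rw [hc x t, hc y t, h1, h2, hId]
    intro x y w
    set L := f (f x y) w with hL
    set R := f x (f y w) with hR
    have hLx : f L x = L := htrans L (f x y) x (hlow (f x y) w) (hlow x y)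
    have hLy : f L y = L := htrans L (f x y) y (hlow (f x y) w) (hAbs x y)
    have hLw : f L w = L := hAbs (f x y) w
    have hRx : f R x = R := hlow x (f y w)
    have hRy : f R y = R := htrans R (f y w) y (hAbs x (f y w)) (hlow y w)
    have hRw : f R w = R := htrans R (f y w) w (hAbs x (f y w)) (hAbs y w)
    have hLR : f L R = L := hglb L x (f y w) hLx (hglb L y w hLy hLw)
    have hRL : f R L = R := hglb R (f x y) w (hglb R x y hRx hRy) hRw
    calc R = f R L := hRL.symm
      _ = f L R := hc R L
      _ = L := hLR
end

section
/- Let A be a symmetric implication zroupoid. Then A satisfies the condition 0 → x = x → x for all x if and only if A satisfies any (equivalently, all) of the following five identities (for all x, y): (42C12): x → (x → (y → y)) = x → ((x → y) → y); (42C13): x → (x → (y → y)) = (x → x) → (y → y); (42C15): x → (x → (y → y)) = ((x → x) → y) → y; (42D12): x → (y → (x → x)) = x → ((y → x) → x); (42F35): (x → y) → (y → x) = ((x → y) → y) → x. Consequently, the five subvarieties of S defined by these identities all coincide. -/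
/-- In a symmetric I-zroupoid, the condition 0 → x = x → x is equivalent
to each of the five identities (42C12), (42C13), (42C15), (42D12), (42F35). -/
theorem stmt_15 {A : Type*} (f : A → A → A) (z : A)
    (hI : ∀ x y w : A, f (f x y) w = f (f (f (f w z) x) (f (f y w) z)) z)
    (hI0 : f (f z z) z = z)
    (hinv : ∀ x : A, f (f x z) z = x)
    (hsym : ∀ x y : A, f (f x (f y z)) z = f (f y (f x z)) z) :
    ((∀ x : A, f z x = f x x) ↔
      (∀ x y : A, f x (f x (f y y)) = f x (f (f x y) y))) ∧
    ((∀ x : A, f z x = f x x) ↔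
      (∀ x y : A, f x (f x (f y y)) = f (f x x) (f y y))) ∧
    ((∀ x : A, f z x = f x x) ↔
      (∀ x y : A, f x (f x (f y y)) = f (f (f x x) y) y)) ∧
    ((∀ x : A, f z x = f x x) ↔
      (∀ x y : A, f x (f y (f x x)) = f x (f (f y x) x))) ∧
    ((∀ x : A, f z x = f x x) ↔
      (∀ x y : A, f (f x y) (f y x) = f (f (f x y) y) x)) := by
  have hh1 : ∀ a b : A, f a (f b z) = f b (f a z) := fun a b =>
    (hinv (f a (f b z))).symm.trans ((congrArg (fun t => f t z) (hsym a b)).trans (hinv (f b (f a z))))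
  have hcp : ∀ x y : A, f x y = f (f y z) (f x z) := fun x y =>
    (congrArg (f x) (hinv y)).symm.trans (hh1 x (f y z))
  have FWD : (∀ x : A, f z x = f x x) →
      (∀ x y : A, f x (f x (f y y)) = f x (f (f x y) y)) ∧
      (∀ x y : A, f x (f x (f y y)) = f (f x x) (f y y)) ∧
      (∀ x y : A, f x (f x (f y y)) = f (f (f x x) y) y) ∧
      (∀ x y : A, f x (f y (f x x)) = f x (f (f y x) x)) := by
    intro hC

    have f4_e4 : ∀ a0 : A, f a0 a0 = f z (f a0 z) := fun a0 => (Eq.trans (((hcp a0 a0)).symm).symm ((hC (f a0 z))).symm)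
    have f4_e5 : ∀ a0 : A, f z (f a0 z) = f z a0 := fun a0 => (Eq.trans ((f4_e4 a0)).symm ((hC a0)).symm)
    have f4_e7 : ∀ a0 a1 : A, f a0 (f a1 z) = f a1 (f a0 z) := fun a0 a1 => (Eq.trans (((hcp a0 (f a1 z))).symm).symm (congrArg (fun _t => f _t (f a0 z)) ((hinv a1))))
    have f4_e9 : ∀ a0 : A, f a0 (f z z) = f z a0 := fun a0 => (Eq.trans ((f4_e7 z a0)).symm (f4_e5 a0))
    have f4_e10 : ∀ a0 a1 : A, f (f a0 z) a1 = f (f a1 z) a0 := fun a0 a1 => (Eq.trans (((hcp (f a0 z) a1)).symm).symm (congrArg (f (f a1 z)) ((hinv a0))))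
    have f4_e11 : ∀ a0 : A, f (f z z) a0 = a0 := fun a0 => (Eq.trans ((f4_e10 a0 z)).symm (hinv a0))
    have f4_e12 : ∀ a0 a1 : A, f (f a0 (f (f a1 a0) z)) z = f (f z a1) a0 := fun a0 a1 => ((Eq.trans (((hI z a1 a0)).symm).symm (congrArg (fun _t => f _t z) ((congrArg (fun _t => f _t (f (f a1 a0) z)) ((hinv a0))))))).symm
    have f4_e14 : ∀ a0 a1 : A, f (f a0 z) (f a1 z) = f a1 a0 := fun a0 a1 => (Eq.trans (Eq.trans ((f4_e7 a1 (f a0 z))).symm (congrArg (f a1) ((f4_e10 a0 z)))) (congrArg (f a1) ((f4_e11 a0))))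
    have f4_e25 : ∀ a0 : A, f (f z a0) z = f (f a0 a0) z := fun a0 => (Eq.trans (Eq.trans ((f4_e12 z a0)).symm (congrArg (fun _t => f _t z) (((f4_e4 (f a0 z))).symm))) (congrArg (fun _t => f _t z) (((hcp a0 a0)).symm)))
    have f4_e33 : ∀ a0 : A, f (f a0 (f a0 z)) z = a0 := fun a0 => ((Eq.trans ((Eq.trans (congrArg (fun _t => f _t a0) (((f4_e4 z)).symm)) (f4_e11 a0))).symm (Eq.trans ((f4_e12 a0 (f z z))).symm (congrArg (fun _t => f _t z) ((congrArg (f a0) ((congrArg (fun _t => f _t z) ((f4_e11 a0)))))))))).symm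
    have f4_e34 : ∀ a0 : A, f a0 (f a0 z) = f a0 z := fun a0 => (Eq.trans ((hinv (f a0 (f a0 z)))).symm (congrArg (fun _t => f _t z) ((f4_e33 a0))))
    have f4_e36 : ∀ a0 : A, f (f a0 z) a0 = a0 := fun a0 => ((Eq.trans ((hinv a0)).symm (Eq.trans ((f4_e34 (f a0 z))).symm (congrArg (f (f a0 z)) ((hinv a0)))))).symm
    have f4_e47 : ∀ a0 a1 : A, f a0 (f z a1) = f (f (f a1 a1) z) (f a0 z) := fun a0 a1 => (Eq.trans (((hcp a0 (f z a1))).symm).symm (congrArg (fun _t => f _t (f a0 z)) ((f4_e25 a1))))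
    have f4_e48 : ∀ a0 a1 : A, f a0 (f a1 a1) = f a0 (f z a1) := fun a0 a1 => (Eq.trans (((hcp a0 (f a1 a1))).symm).symm ((f4_e47 a0 a1)).symm)
    have f4_e56 : ∀ a0 a1 : A, f (f z a0) a1 = f (f a1 z) (f (f a0 a0) z) := fun a0 a1 => (Eq.trans (((hcp (f z a0) a1)).symm).symm (congrArg (f (f a1 z)) ((f4_e25 a0))))
    have f4_e57 : ∀ a0 a1 : A, f (f a0 a0) a1 = f (f z a0) a1 := fun a0 a1 => (Eq.trans (((hcp (f a0 a0) a1)).symm).symm ((f4_e56 a0 a1)).symm)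
    have f4_e63 : ∀ a0 a1 : A, f (f a0 a0) (f a1 z) = f a1 (f (f z a0) z) := fun a0 a1 => (Eq.trans ((f4_e7 a1 (f a0 a0))).symm (congrArg (f a1) (((f4_e25 a0)).symm)))
    have f4_e75 : ∀ a0 a1 : A, f (f a0 a1) a0 = f (f z a1) a0 := fun a0 a1 => (Eq.trans (Eq.trans (((hI a0 a1 a0)).symm).symm (congrArg (fun _t => f _t z) ((congrArg (fun _t => f _t (f (f a1 a0) z)) ((f4_e36 a0)))))) (f4_e12 a0 a1))
    have f4_e78 : ∀ a0 a1 : A, f (f a0 a1) a0 = f (f a1 a1) a0 := fun a0 a1 => (Eq.trans (((f4_e75 a0 a1)).symm).symm (congrArg (fun _t => f _t a0) ((hC a1))))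
    have f4_e80 : ∀ a0 a1 : A, f (f z a0) a1 = f (f a1 a0) a1 := fun a0 a1 => (Eq.trans ((f4_e57 a0 a1)).symm ((f4_e78 a1 a0)).symm)
    have f4_e82 : ∀ a0 a1 : A, f (f a0 (f a1 z)) a0 = f (f a1 a1) a0 := fun a0 a1 => (Eq.trans (((f4_e75 a0 (f a1 z))).symm).symm (congrArg (fun _t => f _t a0) (((f4_e4 a1)).symm)))
    have f4_e90 : ∀ a0 : A, f z (f z a0) = f a0 (f z z) := fun a0 => (Eq.trans ((Eq.trans (f4_e7 (f z a0) z) (f4_e5 (f z a0)))).symm (Eq.trans (((f4_e80 a0 (f z z))).symm).symm (congrArg (fun _t => f _t (f z z)) ((f4_e11 a0)))))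
    have f4_e92 : ∀ a0 : A, f z (f z a0) = f z a0 := fun a0 => (Eq.trans (((f4_e90 a0)).symm).symm (f4_e9 a0))
    have f4_e155 : ∀ a0 a1 : A, f (f a0 a0) (f a1 z) = f a1 (f (f a0 a1) z) := fun a0 a1 => (Eq.trans (Eq.trans ((f4_e82 (f a1 z) a0)).symm (congrArg (fun _t => f _t (f a1 z)) ((f4_e14 a1 a0)))) (f4_e7 (f a0 a1) a1))
    have f4_e168 : ∀ a0 a1 : A, f a0 (f (f a1 a1) z) = f a0 (f (f a1 a0) z) := fun a0 a1 => (Eq.trans ((f4_e7 (f a1 a1) a0)).symm (f4_e155 a1 a0))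
    have f4_e171 : ∀ a0 a1 : A, f a0 (f (f z a1) z) = f a0 (f (f a1 a0) z) := fun a0 a1 => (Eq.trans ((f4_e63 a1 a0)).symm (f4_e155 a1 a0))
    have f4_e173 : ∀ a0 a1 : A, f (f a0 (f (f a1 a1) z)) z = f (f z a1) a0 := fun a0 a1 => ((Eq.trans ((f4_e12 a0 a1)).symm (congrArg (fun _t => f _t z) (((f4_e168 a0 a1)).symm)))).symm
    have f4_e174 : ∀ a0 a1 : A, f (f a0 (f (f z a1) z)) z = f (f z a1) a0 := fun a0 a1 => ((Eq.trans ((f4_e12 a0 a1)).symm (congrArg (fun _t => f _t z) (((f4_e171 a0 a1)).symm)))).symm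
    have f4_e175 : ∀ a0 a1 : A, f (f z a0) (f (f a0 z) a1) = f (f a1 a0) a0 := fun a0 a1 => (Eq.trans ((f4_e173 (f (f a0 z) a1) a0)).symm ((hI a1 a0 a0)).symm)
    have f4_e177 : ∀ a0 a1 : A, f (f z a0) (f (f a0 z) a1) = f (f a1 z) a0 := fun a0 a1 => (Eq.trans ((f4_e174 (f (f a0 z) a1) a0)).symm ((hI a1 z a0)).symm)
    have f4_e178 : ∀ a0 a1 : A, f (f a0 z) a1 = f (f a0 a1) a1 := fun a0 a1 => (Eq.trans ((f4_e177 a1 a0)).symm (f4_e175 a1 a0))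
    have f4_e179 : ∀ a0 a1 : A, f (f (f a0 z) a1) a1 = f a0 a1 := fun a0 a1 => (Eq.trans ((f4_e178 (f a0 z) a1)).symm (congrArg (fun _t => f _t a1) ((hinv a0))))
    have f4_e180 : ∀ a0 a1 : A, f (f a0 a1) a1 = f (f a1 z) a0 := fun a0 a1 => (Eq.trans ((f4_e178 a0 a1)).symm (f4_e10 a0 a1))
    have f4_e183 : ∀ a0 a1 : A, f (f z a0) (f (f a0 z) (f a1 a0)) = f a1 a0 := fun a0 a1 => ((Eq.trans (Eq.trans ((f4_e179 a1 a0)).symm (congrArg (fun _t => f _t a0) ((f4_e178 a1 a0)))) ((f4_e175 a0 (f a1 a0))).symm)).symm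
    have f4_e186 : ∀ a0 a1 : A, f (f a0 z) (f a1 a0) = f a1 a0 := fun a0 a1 => ((Eq.trans (Eq.trans ((f4_e183 a0 a1)).symm (f4_e177 a0 (f a1 a0))) (f4_e10 (f a1 a0) a0))).symm
    have f4_e191 : ∀ a0 a1 : A, f a0 (f a1 (f a0 z)) = f a1 (f a0 z) := fun a0 a1 => ((Eq.trans ((f4_e186 (f a0 z) a1)).symm (congrArg (fun _t => f _t (f a1 (f a0 z))) ((hinv a0))))).symm
    have f4_e192 : ∀ a0 a1 : A, f a0 (f a1 a0) = f z (f a1 a0) := fun a0 a1 => (Eq.trans (Eq.trans ((f4_e179 a0 (f a1 a0))).symm (congrArg (fun _t => f _t (f a1 a0)) ((f4_e186 a0 a1)))) ((hC (f a1 a0))).symm)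
    have f4_e194 : ∀ a0 a1 : A, f (f a0 z) (f a1 z) = f a1 (f a1 a0) := fun a0 a1 => (Eq.trans ((f4_e191 a1 (f a0 z))).symm (congrArg (f a1) (((hcp a1 a0)).symm)))
    have f4_e195 : ∀ a0 a1 : A, f a0 (f a0 a1) = f a0 a1 := fun a0 a1 => (Eq.trans ((f4_e194 a1 a0)).symm ((hcp a0 a1)).symm)
    have f4_e205 : ∀ a0 a1 : A, f (f z a0) (f (f a0 z) a1) = f (f a0 z) a1 := fun a0 a1 => (Eq.trans (((f4_e177 a0 a1)).symm).symm (f4_e10 a1 a0))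
    have f4_e207 : ∀ a0 a1 : A, f (f a0 z) a1 = f (f a1 z) (f (f a0 a1) z) := fun a0 a1 => (Eq.trans (((f4_e178 a0 a1)).symm).symm (hcp (f a0 a1) a1))
    have f4_e217 : ∀ a0 a1 : A, f (f (f z a0) z) a1 = f (f a1 z) (f a1 a0) := fun a0 a1 => (Eq.trans (Eq.trans (((f4_e178 (f z a0) a1)).symm).symm (congrArg (fun _t => f _t a1) (((f4_e75 a1 a0)).symm))) (Eq.trans ((f4_e175 a1 (f a1 a0))).symm (f4_e205 a1 (f a1 a0))))
    have f4_e227 : ∀ a0 a1 : A, f (f a0 z) (f z a1) = f (f a0 z) (f a0 a1) := fun a0 a1 => (Eq.trans (Eq.trans ((f4_e180 (f z a1) a0)).symm (congrArg (fun _t => f _t a0) ((f4_e80 a1 a0)))) (Eq.trans ((f4_e175 a0 (f a0 a1))).symm (f4_e205 a0 (f a0 a1))))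
    have f4_e243 : ∀ a0 a1 : A, f z (f a0 a1) = f a1 (f (f a1 z) (f a0 z)) := fun a0 a1 => (Eq.trans ((f4_e192 a1 a0)).symm (congrArg (f a1) ((hcp a0 a1))))
    have f4_e244 : ∀ a0 a1 : A, f a0 (f a1 a0) = f z (f (f a0 z) (f a1 z)) := fun a0 a1 => (Eq.trans (((f4_e192 a0 a1)).symm).symm (congrArg (f z) ((hcp a1 a0))))
    have f4_e245 : ∀ a0 a1 : A, f z (f (f a0 z) a1) = f a1 (f (f a1 z) a0) := fun a0 a1 => (Eq.trans ((f4_e192 a1 (f a0 z))).symm (congrArg (f a1) ((f4_e10 a0 a1))))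
    have f4_e274 : ∀ a0 a1 : A, f (f a0 z) (f a0 a1) = f z (f a0 a1) := fun a0 a1 => (Eq.trans (Eq.trans (((f4_e178 a0 (f a0 a1))).symm).symm (congrArg (fun _t => f _t (f a0 a1)) ((f4_e195 a0 a1)))) ((hC (f a0 a1))).symm)
    have f4_e276 : ∀ a0 a1 : A, f z (f a0 a1) = f (f (f z a1) z) a0 := fun a0 a1 => (Eq.trans ((f4_e274 a0 a1)).symm ((f4_e217 a1 a0)).symm)
    have f4_e281 : ∀ a0 a1 : A, f (f a0 z) (f z a1) = f z (f a0 a1) := fun a0 a1 => ((Eq.trans ((f4_e274 a0 a1)).symm ((f4_e227 a0 a1)).symm)).symm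
    have f4_e283 : ∀ a0 a1 : A, f z (f (f a0 z) a1) = f a0 (f z a1) := fun a0 a1 => (Eq.trans (((f4_e276 (f a0 z) a1)).symm).symm ((hcp a0 (f z a1))).symm)
    have f4_e286 : ∀ a0 a1 : A, f a0 (f z a1) = f a1 (f z a0) := fun a0 a1 => (Eq.trans (Eq.trans ((f4_e283 a0 a1)).symm (congrArg (f z) ((f4_e10 a0 a1)))) (f4_e283 a1 a0))
    have f4_e292 : ∀ a0 a1 : A, f a0 (f a1 a0) = f a0 (f z a1) := fun a0 a1 => (Eq.trans (Eq.trans (((f4_e244 a0 a1)).symm).symm (f4_e283 a0 (f a1 z))) (congrArg (f a0) ((f4_e5 a1))))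
    have f4_e294 : ∀ a0 a1 : A, f a0 (f z a1) = f z (f a1 a0) := fun a0 a1 => (Eq.trans ((f4_e292 a0 a1)).symm (f4_e192 a0 a1))
    have f4_e302 : ∀ a0 a1 : A, f z (f a0 a1) = f a0 (f z a1) := fun a0 a1 => (Eq.trans ((f4_e294 a1 a0)).symm (f4_e286 a1 a0))
    have f4_e307 : ∀ a0 a1 : A, f a0 (f z a1) = f a1 (f (f a1 z) a0) := fun a0 a1 => (Eq.trans ((f4_e283 a0 a1)).symm (f4_e245 a0 a1))
    exact ⟨fun x y => (Eq.trans (Eq.trans (Eq.trans (f4_e195 x (f y y)) (f4_e48 x y)) ((f4_e302 x y)).symm) ((Eq.trans (Eq.trans (Eq.trans (congrArg (f x) (((f4_e178 x y)).symm)) ((f4_e307 y x)).symm) (f4_e286 y x)) ((f4_e302 x y)).symm)).symm), fun x y => (Eq.trans (Eq.trans (f4_e195 x (f y y)) (f4_e48 x y)) ((Eq.trans (Eq.trans (Eq.trans (Eq.trans (f4_e48 (f x x) y) (f4_e57 x (f z y))) (f4_e286 (f z x) y)) (congrArg (f y) ((f4_e92 x)))) (f4_e286 y x))).symm), fun x y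 => (Eq.trans (Eq.trans (f4_e195 x (f y y)) (f4_e48 x y)) ((Eq.trans (Eq.trans (Eq.trans (Eq.trans (Eq.trans (Eq.trans (hcp (f (f x x) y) y) ((f4_e207 (f x x) y)).symm) (hcp (f (f x x) z) y)) (congrArg (f (f y z)) ((hinv (f x x))))) (f4_e48 (f y z) x)) (f4_e281 y x)) ((f4_e294 x y)).symm)).symm), fun x y => (Eq.trans (Eq.trans (Eq.trans (Eq.trans (congrArg (f x) ((f4_e48 y x))) (congrArg (f x) ((f4_e286 y x)))) (f4_e195 x (f z y))) ((f4_e302 x y)).symm) ((Eq.trans (Eq.trans (Eq.trans (Eq.trans (Eq.trans (Eq.trans (Eq.trans (Eq.trans (f4_e192 x (f y x)) (f4_e243 (f y x) x)) (congrArg (f x) (((f4_e207 y x)).symm))) (f4_e192 x (f y z))) (f4_e243 (f y z) x)) (congrArg (f x) ((congrArg (f (f x z)) ((hinv y)))))) ((f4_e307 y x)).symm) (f4_e286 y x)) ((f4_e302 x y)).symm)).symm)⟩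
  refine ⟨⟨fun hC => (FWD hC).1, ?_⟩, ⟨fun hC => (FWD hC).2.1, ?_⟩, ⟨fun hC => (FWD hC).2.2.1, ?_⟩, ⟨fun hC => (FWD hC).2.2.2, ?_⟩, ⟨?_, ?_⟩⟩
  · intro hyp x
    have b0_e5 : ∀ a0 a1 : A, f (f a0 z) a1 = f (f a1 z) a0 := fun a0 a1 => (Eq.trans (((hcp (f a0 z) a1)).symm).symm (congrArg (f (f a1 z)) ((hinv a0))))
    have b0_e7 : ∀ a0 : A, f (f z z) a0 = a0 := fun a0 => (Eq.trans ((b0_e5 a0 z)).symm (hinv a0))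
    have b0_e9 : ∀ a0 : A, f a0 (f a0 (f z z)) = f a0 a0 := fun a0 => (Eq.trans (((hyp a0 z)).symm).symm (congrArg (f a0) ((hinv a0))))
    have b0_e11 : ∀ a0 a1 : A, f (f a0 (f (f a1 a0) z)) z = f (f z a1) a0 := fun a0 a1 => ((Eq.trans (((hI z a1 a0)).symm).symm (congrArg (fun _t => f _t z) ((congrArg (fun _t => f _t (f (f a1 a0) z)) ((hinv a0))))))).symm
    have b0_e19 : ∀ a0 a1 a2 : A, f (f (f a0 z) a1) a2 = f (f (f a0 a2) (f (f a1 a2) z)) z := fun a0 a1 a2 => (Eq.trans (((hI (f a0 z) a1 a2)).symm).symm (congrArg (fun _t => f _t z) ((congrArg (fun _t => f _t (f (f a1 a2) z)) (((hcp a0 a2)).symm)))))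
    have b0_e27 : ∀ a0 a1 : A, f (f (f z a0) a1) z = f a1 (f (f a0 a1) z) := fun a0 a1 => ((Eq.trans ((hinv (f a1 (f (f a0 a1) z)))).symm (congrArg (fun _t => f _t z) ((b0_e11 a1 a0))))).symm
    have b0_e79 : ∀ a0 a1 : A, f (f (f a0 a1) z) (f (f z a0) a1) = f a0 a1 := fun a0 a1 => (Eq.trans ((Eq.trans (b0_e27 a1 (f (f a0 a1) z)) (congrArg (f (f (f a0 a1) z)) ((b0_e11 a1 a0))))).symm (Eq.trans ((b0_e19 z a0 a1)).symm (congrArg (fun _t => f _t a1) ((b0_e7 a0)))))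
    have b0_e106 : ∀ a0 : A, f (f a0 z) (f z a0) = f a0 a0 := fun a0 => ((Eq.trans (((hcp a0 a0)).symm).symm (Eq.trans (Eq.trans ((b0_e9 (f a0 z))).symm (congrArg (f (f a0 z)) ((b0_e5 a0 (f z z))))) (congrArg (f (f a0 z)) ((congrArg (fun _t => f _t a0) ((hinv z)))))))).symm
    have b0_e135 : ∀ a0 : A, f z a0 = f a0 a0 := fun a0 => (Eq.trans (Eq.trans ((b0_e79 z a0)).symm (congrArg (f (f (f z a0) z)) ((b0_e5 z a0)))) (Eq.trans ((hcp (f a0 z) (f z a0))).symm (b0_e106 a0)))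
    exact (((b0_e135 x)).symm).symm
  · intro hyp x
    have b1_e4 : ∀ a0 a1 : A, f a0 (f a1 z) = f a1 (f a0 z) := fun a0 a1 => (Eq.trans (((hcp a0 (f a1 z))).symm).symm (congrArg (fun _t => f _t (f a0 z)) ((hinv a1))))
    have b1_e5 : ∀ a0 a1 : A, f (f a0 z) a1 = f (f a1 z) a0 := fun a0 a1 => (Eq.trans (((hcp (f a0 z) a1)).symm).symm (congrArg (f (f a1 z)) ((hinv a0))))
    have b1_e6 : ∀ a0 : A, f (f z z) a0 = a0 := fun a0 => (Eq.trans ((b1_e5 a0 z)).symm (hinv a0))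
    have b1_e8 : ∀ a0 : A, f a0 (f z z) = f z (f a0 z) := fun a0 => (Eq.trans (((hcp a0 (f z z))).symm).symm (congrArg (fun _t => f _t (f a0 z)) ((b1_e6 z))))
    have b1_e9 : ∀ a0 : A, f z (f z (f a0 a0)) = f a0 a0 := fun a0 => (Eq.trans (((hyp z a0)).symm).symm (b1_e6 (f a0 a0)))
    have b1_e10 : ∀ a0 a1 : A, f (f a0 (f (f a1 a0) z)) z = f (f z a1) a0 := fun a0 a1 => ((Eq.trans (((hI z a1 a0)).symm).symm (congrArg (fun _t => f _t z) ((congrArg (fun _t => f _t (f (f a1 a0) z)) ((hinv a0))))))).symm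
    have b1_e14 : ∀ a0 a1 : A, f (f (f z a0) a1) z = f a1 (f (f a0 a1) z) := fun a0 a1 => ((Eq.trans ((hinv (f a1 (f (f a0 a1) z)))).symm (congrArg (fun _t => f _t z) ((b1_e10 a1 a0))))).symm
    have b1_e15 : ∀ a0 : A, f a0 (f (f z a0) z) = f a0 z := fun a0 => (Eq.trans ((b1_e14 z a0)).symm (congrArg (fun _t => f _t z) ((b1_e6 a0))))
    have b1_e16 : ∀ a0 : A, f (f z (f a0 z)) a0 = a0 := fun a0 => ((Eq.trans ((hinv a0)).symm (Eq.trans ((b1_e15 (f a0 z))).symm ((hcp (f z (f a0 z)) a0)).symm))).symm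
    have b1_e17 : f z (f z z) = f z z := (Eq.trans ((hinv (f z (f z z)))).symm (congrArg (fun _t => f _t z) ((b1_e16 z))))
    have b1_e21 : ∀ a0 : A, f (f a0 (f a0 z)) z = a0 := fun a0 => ((Eq.trans ((Eq.trans (congrArg (fun _t => f _t a0) (b1_e17)) (b1_e6 a0))).symm (Eq.trans ((b1_e10 a0 (f z z))).symm (congrArg (fun _t => f _t z) ((congrArg (f a0) ((congrArg (fun _t => f _t z) ((b1_e6 a0)))))))))).symm
    have b1_e22 : ∀ a0 : A, f a0 (f a0 z) = f a0 z := fun a0 => (Eq.trans ((hinv (f a0 (f a0 z)))).symm (congrArg (fun _t => f _t z) ((b1_e21 a0))))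
    have b1_e24 : ∀ a0 : A, f (f a0 z) a0 = a0 := fun a0 => ((Eq.trans ((hinv a0)).symm (Eq.trans ((b1_e22 (f a0 z))).symm (congrArg (f (f a0 z)) ((hinv a0)))))).symm
    have b1_e26 : ∀ a0 a1 : A, f (f a0 a1) a0 = f (f z a1) a0 := fun a0 a1 => (Eq.trans (Eq.trans (((hI a0 a1 a0)).symm).symm (congrArg (fun _t => f _t z) ((congrArg (fun _t => f _t (f (f a1 a0) z)) ((b1_e24 a0)))))) (b1_e10 a0 a1))
    have b1_e28 : ∀ a0 a1 : A, f (f z a0) a1 = f (f a1 z) (f (f a1 a0) z) := fun a0 a1 => (Eq.trans ((b1_e26 a1 a0)).symm (hcp (f a1 a0) a1))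
    have b1_e29 : ∀ a0 a1 : A, f (f z a0) a1 = f (f a1 a0) a1 := fun a0 a1 => (Eq.trans (((b1_e28 a0 a1)).symm).symm ((hcp (f a1 a0) a1)).symm)
    have b1_e30 : ∀ a0 : A, f z (f (f z a0) z) = f a0 (f z z) := fun a0 => (Eq.trans ((b1_e4 (f z a0) z)).symm (Eq.trans (((b1_e29 a0 (f z z))).symm).symm (congrArg (fun _t => f _t (f z z)) ((b1_e6 a0)))))
    have b1_e43 : ∀ a0 a1 : A, f (f a0 (f a1 z)) a0 = f (f a1 (f z z)) a0 := fun a0 a1 => (Eq.trans (((b1_e26 a0 (f a1 z))).symm).symm (congrArg (fun _t => f _t a0) (((b1_e8 a1)).symm)))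
    have b1_e46 : ∀ a0 : A, f (f a0 z) (f z a0) = f z a0 := fun a0 => ((Eq.trans (Eq.trans ((b1_e21 (f z a0))).symm (congrArg (fun _t => f _t z) ((congrArg (f (f z a0)) ((b1_e26 z a0)))))) (Eq.trans (Eq.trans (Eq.trans (b1_e14 a0 (f (f z a0) z)) (congrArg (f (f (f z a0) z)) ((b1_e10 a0 z)))) (congrArg (f (f (f z a0) z)) ((b1_e6 a0)))) (b1_e5 (f z a0) a0)))).symm
    have b1_e47 : ∀ a0 : A, f a0 (f z (f a0 z)) = f z (f a0 z) := fun a0 => ((Eq.trans ((b1_e46 (f a0 z))).symm (congrArg (fun _t => f _t (f z (f a0 z))) ((hinv a0))))).symm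
    have b1_e48 : ∀ a0 : A, f z (f a0 z) = f a0 (f a0 (f z z)) := fun a0 => (Eq.trans ((b1_e47 a0)).symm (congrArg (f a0) (((b1_e4 a0 z)).symm)))
    have b1_e53 : ∀ a0 : A, f a0 (f a0 (f z z)) = f a0 (f z z) := fun a0 => (Eq.trans ((b1_e48 a0)).symm ((b1_e4 a0 z)).symm)
    have b1_e83 : ∀ a0 : A, f z (f (f a0 (f z z)) z) = f z a0 := fun a0 => ((Eq.trans (((hcp z a0)).symm).symm (Eq.trans ((b1_e30 (f a0 z))).symm (congrArg (f z) ((congrArg (fun _t => f _t z) (((b1_e8 a0)).symm))))))).symm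
    have b1_e87 : ∀ a0 a1 : A, f (f a0 (f z z)) (f a1 z) = f a1 (f (f a0 a1) z) := fun a0 a1 => (Eq.trans (Eq.trans ((b1_e43 (f a1 z) a0)).symm (congrArg (fun _t => f _t (f a1 z)) (((hcp a0 a1)).symm))) (b1_e4 (f a0 a1) a1))
    have b1_e130 : ∀ a0 a1 : A, f (f (f a0 (f z z)) (f a1 z)) z = f (f z a0) a1 := fun a0 a1 => ((Eq.trans ((b1_e10 a1 a0)).symm (congrArg (fun _t => f _t z) (((b1_e87 a0 a1)).symm)))).symm
    have b1_e131 : ∀ a0 : A, f z (f a0 (f z z)) = f a0 (f z z) := fun a0 => (Eq.trans (Eq.trans ((b1_e83 (f a0 (f z z)))).symm (congrArg (f z) ((b1_e130 a0 z)))) (b1_e30 a0))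
    have b1_e132 : ∀ a0 : A, f z (f z a0) = f z a0 := fun a0 => ((Eq.trans (((hcp z a0)).symm).symm (Eq.trans ((b1_e131 (f a0 z))).symm (congrArg (f z) (((hcp z a0)).symm))))).symm
    have b1_e133 : ∀ a0 : A, f z (f a0 a0) = f a0 a0 := fun a0 => ((Eq.trans ((b1_e9 a0)).symm (b1_e132 (f a0 a0)))).symm
    have b1_e186 : ∀ a0 a1 : A, f (f a0 z) (f (f a0 z) (f a1 a1)) = f a0 (f a0 (f a1 a1)) := fun a0 a1 => ((Eq.trans (Eq.trans (((hyp a0 a1)).symm).symm (congrArg (fun _t => f _t (f a1 a1)) ((hcp a0 a0)))) ((hyp (f a0 z) a1)).symm)).symm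
    have b1_e187 : ∀ a0 : A, f a0 (f z z) = f z a0 := fun a0 => (Eq.trans ((b1_e53 a0)).symm (Eq.trans (Eq.trans ((b1_e186 a0 z)).symm (congrArg (f (f a0 z)) (((hcp z a0)).symm))) (b1_e46 a0)))
    have b1_e189 : ∀ a0 : A, f a0 a0 = f a0 (f z z) := fun a0 => (Eq.trans (Eq.trans ((b1_e133 a0)).symm ((b1_e187 (f a0 a0))).symm) (Eq.trans ((hyp a0 z)).symm (b1_e53 a0)))
    have b1_e190 : ∀ a0 : A, f a0 a0 = f z a0 := fun a0 => (Eq.trans (((b1_e189 a0)).symm).symm (b1_e187 a0))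
    exact ((b1_e190 x)).symm
  · intro hyp x
    have b2_e4 : ∀ a0 : A, f a0 (f a0 (f z z)) = f a0 a0 := fun a0 => ((Eq.trans ((hinv (f a0 a0))).symm ((hyp a0 z)).symm)).symm
    have b2_e5 : ∀ a0 a1 : A, f a0 (f a1 z) = f a1 (f a0 z) := fun a0 a1 => (Eq.trans (((hcp a0 (f a1 z))).symm).symm (congrArg (fun _t => f _t (f a0 z)) ((hinv a1))))
    have b2_e6 : ∀ a0 a1 : A, f (f a0 z) a1 = f (f a1 z) a0 := fun a0 a1 => (Eq.trans (((hcp (f a0 z) a1)).symm).symm (congrArg (f (f a1 z)) ((hinv a0))))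
    have b2_e7 : ∀ a0 : A, f (f z z) a0 = a0 := fun a0 => (Eq.trans ((b2_e6 a0 z)).symm (hinv a0))
    have b2_e8 : ∀ a0 : A, f a0 (f z (f a0 z)) = f a0 a0 := fun a0 => ((Eq.trans ((b2_e4 a0)).symm (congrArg (f a0) ((b2_e5 a0 z))))).symm
    have b2_e11 : ∀ a0 a1 : A, f (f a0 (f (f a1 a0) z)) z = f (f z a1) a0 := fun a0 a1 => ((Eq.trans (((hI z a1 a0)).symm).symm (congrArg (fun _t => f _t z) ((congrArg (fun _t => f _t (f (f a1 a0) z)) ((hinv a0))))))).symm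
    have b2_e14 : ∀ a0 a1 : A, f (f (f z a0) a1) z = f a1 (f (f a0 a1) z) := fun a0 a1 => ((Eq.trans ((hinv (f a1 (f (f a0 a1) z)))).symm (congrArg (fun _t => f _t z) ((b2_e11 a1 a0))))).symm
    have b2_e15 : ∀ a0 : A, f a0 (f (f z a0) z) = f a0 z := fun a0 => (Eq.trans ((b2_e14 z a0)).symm (congrArg (fun _t => f _t z) ((b2_e7 a0))))
    have b2_e16 : ∀ a0 : A, f (f z (f a0 z)) a0 = a0 := fun a0 => ((Eq.trans ((hinv a0)).symm (Eq.trans ((b2_e15 (f a0 z))).symm ((hcp (f z (f a0 z)) a0)).symm))).symm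
    have b2_e17 : f z (f z z) = f z z := (Eq.trans ((hinv (f z (f z z)))).symm (congrArg (fun _t => f _t z) ((b2_e16 z))))
    have b2_e21 : ∀ a0 : A, f (f a0 (f a0 z)) z = a0 := fun a0 => ((Eq.trans ((Eq.trans (congrArg (fun _t => f _t a0) (b2_e17)) (b2_e7 a0))).symm (Eq.trans ((b2_e11 a0 (f z z))).symm (congrArg (fun _t => f _t z) ((congrArg (f a0) ((congrArg (fun _t => f _t z) ((b2_e7 a0)))))))))).symm
    have b2_e22 : ∀ a0 : A, f a0 (f a0 z) = f a0 z := fun a0 => (Eq.trans ((hinv (f a0 (f a0 z)))).symm (congrArg (fun _t => f _t z) ((b2_e21 a0))))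
    have b2_e24 : ∀ a0 : A, f (f a0 z) a0 = a0 := fun a0 => ((Eq.trans ((hinv a0)).symm (Eq.trans ((b2_e22 (f a0 z))).symm (congrArg (f (f a0 z)) ((hinv a0)))))).symm
    have b2_e25 : ∀ a0 a1 : A, f (f a0 a1) a0 = f (f z a1) a0 := fun a0 a1 => (Eq.trans (Eq.trans (((hI a0 a1 a0)).symm).symm (congrArg (fun _t => f _t z) ((congrArg (fun _t => f _t (f (f a1 a0) z)) ((b2_e24 a0)))))) (b2_e11 a0 a1))
    have b2_e47 : ∀ a0 : A, f (f a0 z) (f z a0) = f z a0 := fun a0 => ((Eq.trans (Eq.trans ((b2_e21 (f z a0))).symm (congrArg (fun _t => f _t z) ((congrArg (f (f z a0)) ((b2_e25 z a0)))))) (Eq.trans (Eq.trans (Eq.trans (b2_e14 a0 (f (f z a0) z)) (congrArg (f (f (f z a0) z)) ((b2_e11 a0 z)))) (congrArg (f (f (f z a0) z)) ((b2_e7 a0)))) (b2_e6 (f z a0) a0)))).symm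
    have b2_e48 : ∀ a0 : A, f z (f a0 z) = f a0 a0 := fun a0 => (Eq.trans (Eq.trans ((b2_e47 (f a0 z))).symm (congrArg (fun _t => f _t (f z (f a0 z))) ((hinv a0)))) (b2_e8 a0))
    have b2_e53 : ∀ a0 : A, f a0 a0 = f z a0 := fun a0 => (Eq.trans (Eq.trans (((hcp a0 a0)).symm).symm ((b2_e48 (f a0 z))).symm) (congrArg (f z) ((hinv a0))))
    have b2_e54 : ∀ a0 : A, f z (f a0 z) = f z a0 := fun a0 => ((Eq.trans ((b2_e53 a0)).symm ((b2_e48 a0)).symm)).symm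
    exact ((Eq.trans ((b2_e48 x)).symm (b2_e54 x))).symm
  · intro hyp x
    have b3_e4 : ∀ a0 a1 : A, f a0 (f a1 z) = f a1 (f a0 z) := fun a0 a1 => (Eq.trans (((hcp a0 (f a1 z))).symm).symm (congrArg (fun _t => f _t (f a0 z)) ((hinv a1))))
    have b3_e5 : ∀ a0 a1 : A, f (f a0 z) a1 = f (f a1 z) a0 := fun a0 a1 => (Eq.trans (((hcp (f a0 z) a1)).symm).symm (congrArg (f (f a1 z)) ((hinv a0))))
    have b3_e7 : ∀ a0 : A, f (f z z) a0 = a0 := fun a0 => (Eq.trans ((b3_e5 a0 z)).symm (hinv a0))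
    have b3_e9 : ∀ a0 : A, f z (f a0 (f z z)) = f z a0 := fun a0 => (Eq.trans (((hyp z a0)).symm).symm (congrArg (f z) ((hinv a0))))
    have b3_e11 : ∀ a0 a1 : A, f (f a0 (f (f a1 a0) z)) z = f (f z a1) a0 := fun a0 a1 => ((Eq.trans (((hI z a1 a0)).symm).symm (congrArg (fun _t => f _t z) ((congrArg (fun _t => f _t (f (f a1 a0) z)) ((hinv a0))))))).symm
    have b3_e12 : ∀ a0 a1 a2 : A, f (f (f a0 a1) (f (f a2 (f a0 z)) z)) z = f (f a1 a2) (f a0 z) := fun a0 a1 a2 => ((Eq.trans (((hI a1 a2 (f a0 z))).symm).symm (congrArg (fun _t => f _t z) ((congrArg (fun _t => f _t (f (f a2 (f a0 z)) z)) ((congrArg (fun _t => f _t a1) ((hinv a0))))))))).symm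
    have b3_e14 : ∀ a0 : A, f z (f z (f a0 z)) = f z a0 := fun a0 => ((Eq.trans ((b3_e9 a0)).symm (congrArg (f z) ((b3_e4 a0 z))))).symm
    have b3_e15 : ∀ a0 a1 a2 : A, f (f a0 a1) a2 = f (f (f a1 a2) (f (f (f a2 z) a0) z)) z := fun a0 a1 a2 => (Eq.trans (Eq.trans (((hI a0 a1 a2)).symm).symm (congrArg (fun _t => f _t z) ((hcp (f (f a2 z) a0) (f (f a1 a2) z))))) (congrArg (fun _t => f _t z) ((congrArg (fun _t => f _t (f (f (f a2 z) a0) z)) ((hinv (f a1 a2)))))))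
    have b3_e19 : ∀ a0 a1 a2 : A, f (f (f a0 z) a1) a2 = f (f (f a0 a2) (f (f a1 a2) z)) z := fun a0 a1 a2 => (Eq.trans (((hI (f a0 z) a1 a2)).symm).symm (congrArg (fun _t => f _t z) ((congrArg (fun _t => f _t (f (f a1 a2) z)) (((hcp a0 a2)).symm)))))
    have b3_e28 : ∀ a0 : A, f z (f a0 z) = f z (f z a0) := fun a0 => (Eq.trans (Eq.trans ((b3_e9 (f a0 z))).symm (congrArg (f z) ((b3_e5 a0 (f z z))))) (congrArg (f z) ((congrArg (fun _t => f _t a0) ((hinv z))))))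
    have b3_e32 : ∀ a0 : A, f z (f z (f z a0)) = f z a0 := fun a0 => ((Eq.trans ((b3_e14 a0)).symm (congrArg (f z) ((b3_e28 a0))))).symm
    have b3_e35 : ∀ a0 a1 : A, f (f (f z a0) a1) z = f a1 (f (f a0 a1) z) := fun a0 a1 => ((Eq.trans ((hinv (f a1 (f (f a0 a1) z)))).symm (congrArg (fun _t => f _t z) ((b3_e11 a1 a0))))).symm
    have b3_e36 : ∀ a0 : A, f a0 (f (f z a0) z) = f a0 z := fun a0 => (Eq.trans ((b3_e35 z a0)).symm (congrArg (fun _t => f _t z) ((b3_e7 a0))))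
    have b3_e39 : ∀ a0 : A, f (f z (f a0 z)) a0 = a0 := fun a0 => ((Eq.trans ((hinv a0)).symm (Eq.trans ((b3_e36 (f a0 z))).symm ((hcp (f z (f a0 z)) a0)).symm))).symm
    have b3_e40 : f z (f z z) = f z z := (Eq.trans ((hinv (f z (f z z)))).symm (congrArg (fun _t => f _t z) ((b3_e39 z))))
    have b3_e41 : ∀ a0 : A, f (f a0 (f z z)) a0 = a0 := fun a0 => ((Eq.trans ((b3_e39 a0)).symm (congrArg (fun _t => f _t a0) ((b3_e4 z a0))))).symm
    have b3_e42 : ∀ a0 : A, f (f z (f z a0)) a0 = a0 := fun a0 => ((Eq.trans ((b3_e39 a0)).symm (congrArg (fun _t => f _t a0) ((b3_e28 a0))))).symm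
    have b3_e45 : ∀ a0 : A, f (f z a0) (f z a0) = f z a0 := fun a0 => ((Eq.trans ((b3_e42 (f z a0))).symm (congrArg (fun _t => f _t (f z a0)) ((b3_e32 a0))))).symm
    have b3_e71 : ∀ a0 : A, f (f a0 (f a0 z)) z = a0 := fun a0 => ((Eq.trans ((Eq.trans (congrArg (fun _t => f _t a0) (b3_e40)) (b3_e7 a0))).symm (Eq.trans ((b3_e11 a0 (f z z))).symm (congrArg (fun _t => f _t z) ((congrArg (f a0) ((congrArg (fun _t => f _t z) ((b3_e7 a0)))))))))).symm
    have b3_e77 : ∀ a0 : A, f (f (f a0 z) a0) z = f a0 z := fun a0 => ((Eq.trans ((b3_e71 (f a0 z))).symm (congrArg (fun _t => f _t z) ((congrArg (f (f a0 z)) ((hinv a0))))))).symm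
    have b3_e78 : ∀ a0 a1 : A, f (f (f a0 z) a0) a1 = f a0 a1 := fun a0 a1 => (Eq.trans (((b3_e19 a0 a0 a1)).symm).symm (b3_e71 (f a0 a1)))
    have b3_e166 : ∀ a0 a1 : A, f (f a0 a1) a0 = f (f z a1) a0 := fun a0 a1 => (Eq.trans (Eq.trans (((b3_e15 a0 a1 a0)).symm).symm (congrArg (fun _t => f _t z) ((congrArg (f (f a1 a0)) ((b3_e77 a0)))))) (Eq.trans (congrArg (fun _t => f _t z) ((b3_e4 (f a1 a0) a0))) (b3_e11 a0 a1)))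
    have b3_e186 : ∀ a0 : A, f z a0 = f a0 (f z z) := fun a0 => (Eq.trans ((Eq.trans (Eq.trans (b3_e4 (f z a0) z) (b3_e28 (f z a0))) (b3_e32 a0))).symm (Eq.trans (Eq.trans ((b3_e11 (f z z) a0)).symm (congrArg (fun _t => f _t z) ((b3_e7 (f (f a0 (f z z)) z))))) (hinv (f a0 (f z z)))))
    have b3_e187 : ∀ a0 : A, f (f z a0) a0 = a0 := fun a0 => ((Eq.trans ((b3_e41 a0)).symm (congrArg (fun _t => f _t a0) (((b3_e186 a0)).symm)))).symm
    have b3_e195 : ∀ a0 : A, f z (f z a0) = f z a0 := fun a0 => ((Eq.trans ((b3_e9 a0)).symm (congrArg (f z) (((b3_e186 a0)).symm)))).symm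
    have b3_e210 : ∀ a0 : A, f a0 (f z (f a0 a0)) = f a0 a0 := fun a0 => (Eq.trans (((hyp a0 z)).symm).symm (congrArg (f a0) ((b3_e187 a0))))
    have b3_e217 : ∀ a0 a1 : A, f z (f (f a0 (f z z)) a1) = f z (f a0 a1) := fun a0 a1 => (Eq.trans ((Eq.trans (Eq.trans (Eq.trans (hcp (f (f a0 (f z z)) a1) (f z z)) (b3_e78 z (f (f (f a0 (f z z)) a1) z))) (b3_e28 (f (f a0 (f z z)) a1))) (b3_e195 (f (f a0 (f z z)) a1)))).symm (Eq.trans (Eq.trans ((b3_e12 z (f a0 (f z z)) a1)).symm (congrArg (fun _t => f _t z) ((congrArg (fun _t => f _t (f (f a1 (f z z)) z)) ((b3_e9 a0)))))) (Eq.trans (Eq.trans (Eq.trans (b3_e12 z a0 a1) (b3_e4 (f a0 a1) z)) (b3_e28 (f a0 a1))) (b3_e195 (f a0 a1)))))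
    have b3_e218 : ∀ a0 : A, f z (f a0 a0) = f z a0 := fun a0 => (Eq.trans ((b3_e217 a0 a0)).symm (congrArg (f z) ((b3_e41 a0))))
    have b3_e221 : ∀ a0 : A, f a0 (f z a0) = f a0 a0 := fun a0 => ((Eq.trans ((b3_e210 a0)).symm (congrArg (f a0) ((b3_e218 a0))))).symm
    have b3_e297 : ∀ a0 : A, f z a0 = f a0 a0 := fun a0 => (Eq.trans ((b3_e45 a0)).symm (Eq.trans (Eq.trans ((b3_e166 (f z a0) a0)).symm (congrArg (fun _t => f _t (f z a0)) ((b3_e187 a0)))) (b3_e221 a0)))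
    exact (((b3_e297 x)).symm).symm
  · intro hC x y
    obtain ⟨hA1, hA2, hA3, hA4⟩ := FWD hC
    have f5_e8 : ∀ a0 : A, f a0 a0 = f z (f a0 z) := fun a0 => (Eq.trans (((hcp a0 a0)).symm).symm ((hC (f a0 z))).symm)
    have f5_e9 : ∀ a0 : A, f z (f a0 z) = f z a0 := fun a0 => (Eq.trans ((f5_e8 a0)).symm ((hC a0)).symm)
    have f5_e10 : ∀ a0 a1 a2 a3 a4 : A, f (f (f (f (f a0 a1) a2) a3) (f (f a4 (f (f (f a2 z) a0) (f (f a1 a2) z))) z)) z = f (f a3 a4) (f (f (f a2 z) a0) (f (f a1 a2) z)) := fun a0 a1 a2 a3 a4 => ((Eq.trans (((hI a3 a4 (f (f (f a2 z) a0) (f (f a1 a2) z)))).symm).symm (congrArg (fun _t => f _t z) ((congrArg (fun _t => f _t (f (f a4 (f (f (f a2 z) a0) (f (f a1 a2) z))) z)) ((congrArg (fun _t => f _t a3) (((hI a0 a1 a2)).symm)))))))).symm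
    have f5_e12 : ∀ a0 a1 a2 a3 : A, f (f (f (f a0 a1) a2) (f (f a3 a0) a1)) z = f (f a2 (f (f a1 z) a3)) (f (f a0 a1) z) := fun a0 a1 a2 a3 => ((Eq.trans (Eq.trans (((hI a2 (f (f a1 z) a3) (f (f a0 a1) z))).symm).symm (congrArg (fun _t => f _t z) ((congrArg (f (f (f (f (f a0 a1) z) z) a2)) (((hI a3 a0 a1)).symm))))) (congrArg (fun _t => f _t z) ((congrArg (fun _t => f _t (f (f a3 a0) a1)) ((congrArg (fun _t => f _t a2) ((hinv (f a0 a1)))))))))).symm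
    have f5_e13 : ∀ a0 : A, f a0 (f a0 (f z z)) = f a0 a0 := fun a0 => ((Eq.trans ((hinv (f a0 a0))).symm ((hA3 a0 z)).symm)).symm
    have f5_e14 : ∀ a0 a1 : A, f a0 (f a1 z) = f a1 (f a0 z) := fun a0 a1 => (Eq.trans (((hcp a0 (f a1 z))).symm).symm (congrArg (fun _t => f _t (f a0 z)) ((hinv a1))))
    have f5_e15 : ∀ a0 : A, f a0 (f z z) = f z a0 := fun a0 => (Eq.trans ((f5_e14 z a0)).symm (f5_e9 a0))
    have f5_e16 : ∀ a0 a1 a2 a3 : A, f (f a0 (f (f (f a1 z) a2) (f (f a3 a1) z))) z = f (f (f (f z z) a0) (f (f (f a2 a3) a1) z)) z := fun a0 a1 a2 a3 => (Eq.trans (((hI a0 (f (f (f a1 z) a2) (f (f a3 a1) z)) z)).symm).symm (congrArg (fun _t => f _t z) ((congrArg (f (f (f z z) a0)) ((congrArg (fun _t => f _t z) (((hI a2 a3 a1)).symm)))))))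
    have f5_e17 : ∀ a0 : A, f a0 (f z z) = f a0 a0 := fun a0 => (Eq.trans (((f5_e15 a0)).symm).symm (hC a0))
    have f5_e18 : ∀ a0 a1 : A, f (f a0 (f (f a1 a0) z)) z = f (f z a1) a0 := fun a0 a1 => ((Eq.trans (((hI z a1 a0)).symm).symm (congrArg (fun _t => f _t z) ((congrArg (fun _t => f _t (f (f a1 a0) z)) ((hinv a0))))))).symm
    have f5_e19 : ∀ a0 a1 a2 : A, f (f (f a0 a1) (f (f a2 (f a0 z)) z)) z = f (f a1 a2) (f a0 z) := fun a0 a1 a2 => ((Eq.trans (((hI a1 a2 (f a0 z))).symm).symm (congrArg (fun _t => f _t z) ((congrArg (fun _t => f _t (f (f a2 (f a0 z)) z)) ((congrArg (fun _t => f _t a1) ((hinv a0))))))))).symm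
    have f5_e22 : ∀ a0 : A, f a0 (f a0 a0) = f a0 a0 := fun a0 => ((Eq.trans ((f5_e13 a0)).symm (congrArg (f a0) ((f5_e17 a0))))).symm
    have f5_e23 : ∀ a0 a1 a2 : A, f (f a0 (f (f z z) a1)) a2 = f (f a0 a1) a2 := fun a0 a1 a2 => ((Eq.trans (Eq.trans (((hI a0 a1 a2)).symm).symm (hcp (f (f (f a2 z) a0) (f (f a1 a2) z)) z)) (Eq.trans (Eq.trans ((hcp (f (f (f a2 z) a0) (f (f a1 a2) z)) z)).symm (f5_e12 a2 z a0 a1)) (congrArg (f (f a0 (f (f z z) a1))) ((hinv a2)))))).symm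
    have f5_e24 : ∀ a0 a1 a2 : A, f (f a0 a1) a2 = f (f (f a1 a2) (f (f (f a2 z) a0) z)) z := fun a0 a1 a2 => (Eq.trans (Eq.trans (((hI a0 a1 a2)).symm).symm (congrArg (fun _t => f _t z) ((hcp (f (f a2 z) a0) (f (f a1 a2) z))))) (congrArg (fun _t => f _t z) ((congrArg (fun _t => f _t (f (f (f a2 z) a0) z)) ((hinv (f a1 a2)))))))
    have f5_e25 : ∀ a0 a1 : A, f (f a0 z) a1 = f (f a1 z) a0 := fun a0 a1 => (Eq.trans (((hcp (f a0 z) a1)).symm).symm (congrArg (f (f a1 z)) ((hinv a0))))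
    have f5_e26 : ∀ a0 : A, f (f z z) a0 = a0 := fun a0 => (Eq.trans ((f5_e25 a0 z)).symm (hinv a0))
    have f5_e27 : ∀ a0 a1 a2 : A, f (f (f (f a0 z) a1) (f (f a2 a1) z)) z = f (f a0 a2) a1 := fun a0 a1 a2 => ((Eq.trans (Eq.trans (((hI a0 a2 a1)).symm).symm (congrArg (fun _t => f _t z) ((congrArg (fun _t => f _t (f (f a2 a1) z)) ((hcp (f a1 z) a0)))))) (congrArg (fun _t => f _t z) ((congrArg (fun _t => f _t (f (f a2 a1) z)) ((congrArg (f (f a0 z)) ((hinv a1))))))))).symm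
    have f5_e29 : ∀ a0 : A, f z (f a0 (f z z)) = f z a0 := fun a0 => (Eq.trans (((hA4 z a0)).symm).symm (congrArg (f z) ((hinv a0))))
    have f5_e30 : ∀ a0 : A, f z (f z a0) = f z a0 := fun a0 => ((Eq.trans ((f5_e29 a0)).symm (congrArg (f z) ((f5_e15 a0))))).symm
    have f5_e31 : ∀ a0 : A, f z (f a0 a0) = f z a0 := fun a0 => ((Eq.trans ((f5_e29 a0)).symm (congrArg (f z) ((f5_e17 a0))))).symm
    have f5_e32 : ∀ a0 a1 a2 : A, f (f (f a0 z) a1) a2 = f (f (f a0 a2) (f (f a1 a2) z)) z := fun a0 a1 a2 => (Eq.trans (((hI (f a0 z) a1 a2)).symm).symm (congrArg (fun _t => f _t z) ((congrArg (fun _t => f _t (f (f a1 a2) z)) (((hcp a0 a2)).symm)))))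
    have f5_e33 : ∀ a0 a1 a2 : A, f (f (f a0 a1) (f (f a0 a2) z)) z = f (f a1 (f a2 z)) (f a0 z) := fun a0 a1 a2 => ((Eq.trans (Eq.trans (((hI a1 (f a2 z) (f a0 z))).symm).symm (congrArg (fun _t => f _t z) ((congrArg (f (f (f (f a0 z) z) a1)) ((congrArg (fun _t => f _t z) (((hcp a0 a2)).symm))))))) (congrArg (fun _t => f _t z) ((congrArg (fun _t => f _t (f (f a0 a2) z)) ((congrArg (fun _t => f _t a1) ((hinv a0))))))))).symm
    have f5_e34 : ∀ a0 a1 : A, f (f a0 z) a1 = f (f a0 a1) a1 := fun a0 a1 => (Eq.trans (Eq.trans (((hI a0 z a1)).symm).symm (congrArg (fun _t => f _t z) ((congrArg (f (f (f a1 z) a0)) ((congrArg (fun _t => f _t z) ((hC a1)))))))) (Eq.trans (Eq.trans (f5_e12 a1 z a0 a1) (congrArg (fun _t => f _t (f (f a1 z) z)) ((congrArg (f a0) ((f5_e26 a1)))))) (congrArg (f (f a0 a1)) ((hinv a1)))))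
    have f5_e37 : ∀ a0 a1 : A, f (f (f a0 z) a1) a0 = f (f (f z a0) (f (f a1 a0) z)) z := fun a0 a1 => (Eq.trans (Eq.trans (((hI (f a0 z) a1 a0)).symm).symm (congrArg (fun _t => f _t z) ((congrArg (fun _t => f _t (f (f a1 a0) z)) (((hC (f a0 z))).symm))))) (congrArg (fun _t => f _t z) ((congrArg (fun _t => f _t (f (f a1 a0) z)) ((f5_e9 a0))))))
    have f5_e53 : ∀ a0 a1 : A, f (f a0 a1) a1 = f (f a1 z) a0 := fun a0 a1 => (Eq.trans ((f5_e34 a0 a1)).symm (f5_e25 a0 a1))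
    have f5_e74 : ∀ a0 a1 : A, f (f (f a0 z) a1) a1 = f a0 a1 := fun a0 a1 => (Eq.trans (((f5_e53 (f a0 z) a1)).symm).symm ((hcp a0 a1)).symm)
    have f5_e80 : ∀ a0 a1 : A, f a0 (f a0 (f z a1)) = f a0 (f a0 (f a1 a1)) := fun a0 a1 => (Eq.trans ((Eq.trans (congrArg (f a0) ((congrArg (f a0) (((hC (f a1 a1))).symm)))) (congrArg (f a0) ((congrArg (f a0) ((f5_e31 a1))))))).symm (Eq.trans (Eq.trans (((hA2 a0 (f a1 a1))).symm).symm (congrArg (f (f a0 a0)) (((hA2 a1 a1)).symm))) (Eq.trans (Eq.trans (congrArg (f (f a0 a0)) ((congrArg (f a1) ((f5_e22 a1))))) (congrArg (f (f a0 a0)) ((f5_e22 a1)))) ((hA2 a0 a1)).symm)))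
    have f5_e90 : ∀ a0 a1 : A, f (f (f a0 z) a1) a0 = f a1 a0 := fun a0 a1 => ((Eq.trans ((f5_e74 a1 a0)).symm (congrArg (fun _t => f _t a0) ((f5_e25 a1 a0))))).symm
    have f5_e92 : ∀ a0 a1 : A, f (f a0 z) (f a1 a0) = f a1 a0 := fun a0 a1 => ((Eq.trans (Eq.trans ((f5_e74 a1 a0)).symm (congrArg (fun _t => f _t a0) ((f5_e34 a1 a0)))) (f5_e53 (f a1 a0) a0))).symm
    have f5_e101 : ∀ a0 a1 : A, f a0 (f (f a1 (f a0 z)) z) = f a0 a1 := fun a0 a1 => ((Eq.trans (Eq.trans (((hcp a0 a1)).symm).symm (f5_e34 a1 (f a0 z))) (f5_e14 (f a1 (f a0 z)) a0))).symm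
    have f5_e122 : ∀ a0 a1 : A, f a0 (f (f a0 a1) z) = f a1 (f a0 z) := fun a0 a1 => ((Eq.trans (Eq.trans ((f5_e90 (f a0 z) a1)).symm (congrArg (fun _t => f _t (f a0 z)) ((congrArg (fun _t => f _t a1) ((hinv a0)))))) (f5_e14 (f a0 a1) a0))).symm
    have f5_e123 : ∀ a0 a1 : A, f a0 (f a1 a0) = f z (f a1 a0) := fun a0 a1 => (Eq.trans (Eq.trans ((f5_e74 a0 (f a1 a0))).symm (congrArg (fun _t => f _t (f a1 a0)) ((f5_e92 a0 a1)))) ((hC (f a1 a0))).symm)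
    have f5_e144 : ∀ a0 a1 : A, f z (f a0 a1) = f a1 (f a0 a1) := fun a0 a1 => (Eq.trans (((hC (f a0 a1))).symm).symm (Eq.trans ((hC (f a0 a1))).symm ((f5_e123 a1 a0)).symm))
    have f5_e151 : ∀ a0 a1 : A, f z (f a0 (f a1 a0)) = f z (f a1 a0) := fun a0 a1 => ((Eq.trans ((f5_e30 (f a1 a0))).symm (congrArg (f z) ((f5_e144 a1 a0))))).symm
    have f5_e153 : ∀ a0 a1 : A, f a0 (f a0 (f z a1)) = f a0 (f a1 a0) := fun a0 a1 => (Eq.trans ((Eq.trans ((f5_e80 a0 (f a1 z))).symm (congrArg (f a0) ((congrArg (f a0) ((f5_e9 a1))))))).symm (Eq.trans (Eq.trans (((hA1 a0 (f a1 z))).symm).symm (congrArg (f a0) ((f5_e14 (f a0 (f a1 z)) a1)))) (congrArg (f a0) ((f5_e101 a1 a0)))))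
    have f5_e157 : ∀ a0 a1 : A, f a0 (f a0 (f z a1)) = f a1 (f a0 a0) := fun a0 a1 => (Eq.trans ((Eq.trans ((f5_e80 a0 (f a1 z))).symm (congrArg (f a0) ((congrArg (f a0) ((f5_e9 a1))))))).symm (Eq.trans (Eq.trans (((hA3 a0 (f a1 z))).symm).symm (f5_e14 (f (f a0 a0) (f a1 z)) a1)) (f5_e101 a1 (f a0 a0))))
    have f5_e159 : ∀ a0 a1 : A, f a0 (f a1 a1) = f a1 (f a0 a1) := fun a0 a1 => (Eq.trans ((f5_e157 a1 a0)).symm (f5_e153 a1 a0))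
    have f5_e166 : ∀ a0 a1 : A, f a0 (f a1 a0) = f a1 (f z a0) := fun a0 a1 => (Eq.trans ((f5_e159 a1 a0)).symm (congrArg (f a1) (((hC a0)).symm)))
    have f5_e179 : ∀ a0 a1 : A, f a0 (f z a1) = f a0 (f a1 a1) := fun a0 a1 => (Eq.trans ((f5_e166 a1 a0)).symm ((f5_e159 a0 a1)).symm)
    have f5_e230 : ∀ a0 a1 : A, f z (f a0 (f a1 a1)) = f z (f a0 a1) := fun a0 a1 => ((Eq.trans ((f5_e151 a1 a0)).symm (congrArg (f z) (((f5_e159 a0 a1)).symm)))).symm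
    have f5_e252 : ∀ a0 a1 a2 : A, f (f a0 (f (f z a1) (f (f a2 a1) z))) z = f (f a0 (f (f a2 a1) z)) z := fun a0 a1 a2 => ((Eq.trans ((Eq.trans (congrArg (fun _t => f _t z) ((congrArg (fun _t => f _t (f (f (f (f z z) a2) a1) z)) ((f5_e26 a0))))) (congrArg (fun _t => f _t z) ((congrArg (f a0) ((congrArg (fun _t => f _t z) ((congrArg (fun _t => f _t a1) ((f5_e26 a2))))))))))).symm (Eq.trans (Eq.trans ((f5_e16 a0 a1 (f z z) a2)).symm (congrArg (fun _t => f _t z) ((congrArg (f a0) ((congrArg (fun _t => f _t (f (f a2 a1) z)) ((f5_e15 (f a1 z))))))))) (congrArg (fun _t => f _t z) ((congrArg (f a0) ((congrArg (fun _t => f _t (f (f a2 a1) z)) ((f5_e9 a1)))))))))).symm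
    have f5_e286 : ∀ a0 a1 : A, f a0 (f a1 a1) = f a0 (f a1 (f z z)) := fun a0 a1 => (Eq.trans ((f5_e179 a0 a1)).symm (congrArg (f a0) (((f5_e15 a1)).symm)))
    have f5_e287 : ∀ a0 a1 : A, f (f (f z a0) a1) z = f a1 (f (f a0 a1) z) := fun a0 a1 => ((Eq.trans ((hinv (f a1 (f (f a0 a1) z)))).symm (congrArg (fun _t => f _t z) ((f5_e18 a1 a0))))).symm
    have f5_e291 : ∀ a0 a1 : A, f a0 (f z a1) = f a0 (f a1 (f z z)) := fun a0 a1 => (Eq.trans (((f5_e179 a0 a1)).symm).symm (congrArg (f a0) (((f5_e17 a1)).symm)))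
    have f5_e363 : ∀ a0 a1 a2 : A, f (f a0 a1) a2 = f (f (f a1 z) (f a0 z)) a2 := fun a0 a1 a2 => (Eq.trans (Eq.trans ((f5_e23 a0 a1 a2)).symm (congrArg (fun _t => f _t a2) ((hcp a0 (f (f z z) a1))))) (congrArg (fun _t => f _t a2) ((congrArg (fun _t => f _t (f a0 z)) ((f5_e90 z a1))))))
    have f5_e368 : ∀ a0 a1 a2 : A, f (f a0 (f a1 a1)) a2 = f (f a0 (f z a1)) a2 := fun a0 a1 a2 => (Eq.trans (Eq.trans ((f5_e23 a0 (f a1 a1) a2)).symm (congrArg (fun _t => f _t a2) ((congrArg (f a0) (((hA2 z a1)).symm))))) (Eq.trans (congrArg (fun _t => f _t a2) ((congrArg (f a0) ((f5_e30 (f a1 a1)))))) (congrArg (fun _t => f _t a2) ((congrArg (f a0) ((f5_e31 a1)))))))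
    have f5_e372 : ∀ a0 a1 a2 : A, f (f a0 (f z a1)) a2 = f (f a0 (f a1 (f z z))) a2 := fun a0 a1 a2 => (Eq.trans ((Eq.trans (Eq.trans (congrArg (fun _t => f _t a2) (((f5_e291 a0 (f a1 (f z z)))).symm)) (congrArg (fun _t => f _t a2) ((congrArg (f a0) ((f5_e230 a1 z)))))) (congrArg (fun _t => f _t a2) ((congrArg (f a0) ((f5_e9 a1))))))).symm (Eq.trans (Eq.trans ((f5_e23 a0 (f (f a1 (f z z)) (f z z)) a2)).symm (congrArg (fun _t => f _t a2) ((congrArg (f a0) (((hA4 (f z z) a1)).symm))))) (Eq.trans (Eq.trans (congrArg (fun _t => f _t a2) ((congrArg (f a0) ((f5_e26 (f a1 (f (f z z) (f z z)))))))) (congrArg (fun _t => f _t a2) ((congrArg (f a0) (((f5_e179 a1 (f z z))).symm))))) (congrArg (fun _t => f _t a2) ((congrArg (f a0) (((f5_e286 a1 z)).symm)))))))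
    have f5_e394 : ∀ a0 a1 : A, f (f z a0) a1 = f (f a0 a0) a1 := fun a0 a1 => (Eq.trans (((f5_e24 z a0 a1)).symm).symm (Eq.trans ((f5_e24 z a0 a1)).symm (congrArg (fun _t => f _t a1) ((hC a0)))))
    have f5_e430 : ∀ a0 a1 : A, f (f a0 (f z z)) a1 = f (f z a0) a1 := fun a0 a1 => (Eq.trans (((f5_e24 a0 (f z z) a1)).symm).symm (Eq.trans ((f5_e24 a0 (f z z) a1)).symm (congrArg (fun _t => f _t a1) ((f5_e15 a0)))))
    have f5_e449 : ∀ a0 a1 : A, f a0 (f (f a1 a0) z) = f (f a1 (f z z)) (f a0 z) := fun a0 a1 => (Eq.trans ((f5_e14 (f a1 a0) a0)).symm (Eq.trans (Eq.trans ((f5_e19 a0 a1 a0)).symm (congrArg (fun _t => f _t z) ((congrArg (f (f a0 a1)) ((f5_e24 a0 (f a0 z) z)))))) (Eq.trans (Eq.trans (Eq.trans (Eq.trans (Eq.trans (congrArg (fun _t => f _t z) ((congrArg (f (f a0 a1)) ((f5_e12 a0 z z (f z z)))))) (congrArg (fun _t => f _t z) ((congrArg (f (f a0 a1)) ((f5_e368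 z (f z z) (f (f a0 z) z))))))) (congrArg (fun _t => f _t z) ((congrArg (f (f a0 a1)) (((f5_e372 z z (f (f a0 z) z))).symm))))) (congrArg (fun _t => f _t z) ((congrArg (f (f a0 a1)) ((f5_e430 z (f (f a0 z) z))))))) (f5_e252 (f a0 a1) z a0)) (f5_e33 a0 a1 z))))
    have f5_e476 : ∀ a0 a1 a2 : A, f (f a0 a1) (f a2 a0) = f (f z a1) (f a2 a0) := fun a0 a1 a2 => (Eq.trans ((Eq.trans (congrArg (f (f a0 a1)) ((congrArg (fun _t => f _t (f (f a0 z) z)) ((f5_e26 a2))))) (congrArg (f (f a0 a1)) ((congrArg (f a2) ((hinv a0))))))).symm (Eq.trans (Eq.trans ((f5_e10 a2 a0 z a0 a1)).symm (congrArg (fun _t => f _t z) ((congrArg (fun _t => f _t (f (f a1 (f (f (f z z) a2) (f (f a0 z) z))) z)) ((f5_e25 (f a2 a0) a0)))))) (Eq.trans (Eq.trans (Eq.trans (congrArg (fun _t => f _t z) ((congrArg (fun _t => f _t (f (f a1 (f (f (f z z) a2) (f (f a0 z) z))) z)) ((f5_e92 a0 a2))))) (congrArg (fun _t => f _t z) ((congrArg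 (f (f a2 a0)) ((congrArg (fun _t => f _t z) ((congrArg (f a1) ((congrArg (fun _t => f _t (f (f a0 z) z)) ((f5_e26 a2)))))))))))) (congrArg (fun _t => f _t z) ((congrArg (f (f a2 a0)) ((congrArg (fun _t => f _t z) ((congrArg (f a1) ((congrArg (f a2) ((hinv a0)))))))))))) (f5_e18 (f a2 a0) a1))))
    have f5_e506 : ∀ a0 a1 a2 : A, f (f (f a0 z) a1) (f (f a2 a1) z) = f (f (f a0 a2) a1) z := fun a0 a1 a2 => (Eq.trans ((hinv (f (f (f a0 z) a1) (f (f a2 a1) z)))).symm (congrArg (fun _t => f _t z) ((f5_e27 a0 a1 a2))))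
    have f5_e607 : ∀ a0 a1 a2 : A, f (f (f (f a0 z) a1) a2) z = f (f a0 a2) (f (f a1 a2) z) := fun a0 a1 a2 => ((Eq.trans ((hinv (f (f a0 a2) (f (f a1 a2) z)))).symm (congrArg (fun _t => f _t z) (((f5_e32 a0 a1 a2)).symm)))).symm
    have f5_e648 : ∀ a0 a1 : A, f (f z a0) (f (f a1 a0) z) = f (f a1 a0) z := fun a0 a1 => (Eq.trans ((Eq.trans (congrArg (fun _t => f _t z) ((congrArg (fun _t => f _t a0) ((f5_e18 a1 z))))) (f5_e607 z a1 a0))).symm (Eq.trans (Eq.trans (((f5_e32 (f a1 (f (f z a1) z)) a0 z)).symm).symm (congrArg (fun _t => f _t z) ((congrArg (fun _t => f _t (f (f a0 z) z)) ((f5_e18 a1 z)))))) (Eq.trans (Eq.trans (Eq.trans (f5_e12 z z a1 a0) (f5_e14 (f a1 (f (f z z) a0)) (f z z))) ((hcp (f a1 (f (f z z) a0)) z)).symm) (congrArg (fun _t => f _t z) ((congrArg (f a1) ((f5_e26 a0))))))))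
    have f5_e807 : ∀ a0 a1 : A, f (f a0 z) (f a1 z) = f (f z a1) (f a1 a0) := fun a0 a1 => (Eq.trans ((Eq.trans (Eq.trans (hcp (f (f (f a1 z) z) (f a0 z)) (f a1 z)) (f5_e122 (f (f a1 z) z) (f a0 z))) (congrArg (f (f a0 z)) ((hinv (f a1 z)))))).symm (Eq.trans (Eq.trans (((f5_e37 (f a1 z) (f a0 z))).symm).symm (congrArg (fun _t => f _t z) ((congrArg (f (f z (f a1 z))) ((congrArg (fun _t => f _t z) (((hcp a1 a0)).symm))))))) (Eq.trans (Eq.trans (Eq.trans (f5_e287 (f a1 z) (f (f a1 a0) z)) (f5_e449 (f (f a1 a0) z) (f a1 z))) ((f5_e363 z a1 (f (f (f a1 a0) z) z))).symm) (congrArg (f (f z a1)) ((hinv (f a1 a0)))))))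
    have f5_e808 : ∀ a0 a1 : A, f (f z a0) (f a0 a1) = f a0 a1 := fun a0 a1 => (Eq.trans ((f5_e807 a1 a0)).symm ((hcp a0 a1)).symm)
    exact (Eq.trans (Eq.trans (f5_e476 x y y) (f5_e808 y x)) ((Eq.trans (Eq.trans (Eq.trans (Eq.trans (Eq.trans (Eq.trans (hcp (f (f x y) y) x) (congrArg (f (f x z)) (((f5_e506 x y y)).symm))) (congrArg (f (f x z)) ((f5_e14 (f (f x z) y) (f y y))))) (congrArg (f (f x z)) (((f5_e394 y (f (f (f x z) y) z))).symm))) (congrArg (f (f x z)) ((f5_e648 y (f x z))))) (f5_e122 (f x z) y)) (congrArg (f y) ((hinv x))))).symm)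
  · intro hyp x
    have b4_e4 : ∀ a0 a1 : A, f a0 (f a1 z) = f a1 (f a0 z) := fun a0 a1 => (Eq.trans (((hcp a0 (f a1 z))).symm).symm (congrArg (fun _t => f _t (f a0 z)) ((hinv a1))))
    have b4_e5 : ∀ a0 a1 : A, f (f a0 z) a1 = f (f a1 z) a0 := fun a0 a1 => (Eq.trans (((hcp (f a0 z) a1)).symm).symm (congrArg (f (f a1 z)) ((hinv a0))))
    have b4_e6 : ∀ a0 : A, f (f z z) a0 = a0 := fun a0 => (Eq.trans ((b4_e5 a0 z)).symm (hinv a0))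
    have b4_e7 : ∀ a0 : A, f (f a0 z) (f z a0) = f a0 a0 := fun a0 => (Eq.trans (((hyp a0 z)).symm).symm (congrArg (fun _t => f _t a0) ((hinv a0))))
    have b4_e9 : ∀ a0 a1 : A, f (f a0 (f (f a1 a0) z)) z = f (f z a1) a0 := fun a0 a1 => ((Eq.trans (((hI z a1 a0)).symm).symm (congrArg (fun _t => f _t z) ((congrArg (fun _t => f _t (f (f a1 a0) z)) ((hinv a0))))))).symm
    have b4_e10 : ∀ a0 : A, f (f z a0) a0 = a0 := fun a0 => (Eq.trans (Eq.trans ((hinv (f (f z a0) a0))).symm (congrArg (fun _t => f _t z) (((hyp z a0)).symm))) (Eq.trans (Eq.trans (congrArg (fun _t => f _t z) ((b4_e4 (f z a0) a0))) (b4_e9 a0 z)) (b4_e6 a0)))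
    have b4_e12 : ∀ a0 : A, f a0 (f (f z a0) z) = f a0 z := fun a0 => (Eq.trans ((b4_e4 (f z a0) a0)).symm (Eq.trans (((hyp z a0)).symm).symm (congrArg (fun _t => f _t z) ((b4_e10 a0)))))
    have b4_e15 : ∀ a0 : A, f (f z (f a0 z)) a0 = a0 := fun a0 => ((Eq.trans ((hinv a0)).symm (Eq.trans ((b4_e12 (f a0 z))).symm ((hcp (f z (f a0 z)) a0)).symm))).symm
    have b4_e16 : f z (f z z) = f z z := (Eq.trans ((hinv (f z (f z z)))).symm (congrArg (fun _t => f _t z) ((b4_e15 z))))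
    have b4_e21 : ∀ a0 a1 : A, f (f (f z a0) a1) z = f a1 (f (f a0 a1) z) := fun a0 a1 => ((Eq.trans ((hinv (f a1 (f (f a0 a1) z)))).symm (congrArg (fun _t => f _t z) ((b4_e9 a1 a0))))).symm
    have b4_e24 : ∀ a0 : A, f (f a0 (f a0 z)) z = a0 := fun a0 => ((Eq.trans ((Eq.trans (congrArg (fun _t => f _t a0) (b4_e16)) (b4_e6 a0))).symm (Eq.trans ((b4_e9 a0 (f z z))).symm (congrArg (fun _t => f _t z) ((congrArg (f a0) ((congrArg (fun _t => f _t z) ((b4_e6 a0)))))))))).symm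
    have b4_e25 : ∀ a0 : A, f a0 (f a0 z) = f a0 z := fun a0 => (Eq.trans ((hinv (f a0 (f a0 z)))).symm (congrArg (fun _t => f _t z) ((b4_e24 a0))))
    have b4_e27 : ∀ a0 : A, f (f a0 z) a0 = a0 := fun a0 => ((Eq.trans ((hinv a0)).symm (Eq.trans ((b4_e25 (f a0 z))).symm (congrArg (f (f a0 z)) ((hinv a0)))))).symm
    have b4_e33 : ∀ a0 a1 : A, f (f a0 a1) a0 = f (f z a1) a0 := fun a0 a1 => (Eq.trans (Eq.trans (((hI a0 a1 a0)).symm).symm (congrArg (fun _t => f _t z) ((congrArg (fun _t => f _t (f (f a1 a0) z)) ((b4_e27 a0)))))) (b4_e9 a0 a1))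
    have b4_e63 : ∀ a0 : A, f z a0 = f a0 a0 := fun a0 => (Eq.trans (Eq.trans ((b4_e24 (f z a0))).symm (congrArg (fun _t => f _t z) ((congrArg (f (f z a0)) ((b4_e33 z a0)))))) (Eq.trans (Eq.trans (Eq.trans (Eq.trans (b4_e21 a0 (f (f z a0) z)) (congrArg (f (f (f z a0) z)) ((b4_e9 a0 z)))) (congrArg (f (f (f z a0) z)) ((b4_e6 a0)))) (b4_e5 (f z a0) a0)) (b4_e7 a0)))
    exact (((b4_e63 x)).symm).symm
end

section
/- Let A be a symmetric implication zroupoid. Then A satisfies x → (y → z) = (x → y) → z for all x, y, z if and only if A satisfies any (equivalently, all) of the following nine identities (for all u, x, y, z): (44A12): u → (x → (y → z)) = u → ((x → y) → z); (44A13): u → (x → (y → z)) = (u → x) → (y → z); (44A14): u → (x → (y → z)) = (u → (x → y)) → z; (44A15): u → (x → (y → z)) = ((u → x) → y) → z; (44A23): u → ((x → y) → z) = (u → x) → (y → z); (44A24): u → ((x → y) → z) = (u → (x → y)) → z; (44A34): (u → x) → (y → z) = (u → (x → y)) → z; (44A35): (u → x) → (y → z) = ((u → x) → y) → z; (44A45):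 (u → (x → y)) → z = ((u → x) → y) → z. Consequently, the nine subvarieties of S defined by these identities all equal the subvariety 33A12 of S defined by associativity. -/
/-- In a symmetric I-zroupoid, associativity x → (y → z) = (x → y) → z is
equivalent to each of the nine identities (44A12)-(44A45). -/
theorem stmt_18 {A : Type*} (f : A → A → A) (z : A)
    (hI : ∀ x y w : A, f (f x y) w = f (f (f (f w z) x) (f (f y w) z)) z)
    (hI0 : f (f z z) z = z)
    (hinv : ∀ x : A, f (f x z) z = x)
    (hsym : ∀ x y : A, f (f x (f y z)) z = f (f y (f x z)) z) :
    ((∀ x y w : A, f x (f y w) = f (f x y) w) ↔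
      (∀ u x y w : A, f u (f x (f y w)) = f u (f (f x y) w))) ∧
    ((∀ x y w : A, f x (f y w) = f (f x y) w) ↔
      (∀ u x y w : A, f u (f x (f y w)) = f (f u x) (f y w))) ∧
    ((∀ x y w : A, f x (f y w) = f (f x y) w) ↔
      (∀ u x y w : A, f u (f x (f y w)) = f (f u (f x y)) w)) ∧
    ((∀ x y w : A, f x (f y w) = f (f x y) w) ↔
      (∀ u x y w : A, f u (f x (f y w)) = f (f (f u x) y) w)) ∧
    ((∀ x y w : A, f x (f y w) = f (f x y) w) ↔
      (∀ u x y w : A, f u (f (f x y) w) = f (f u x) (f y w))) ∧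
    ((∀ x y w : A, f x (f y w) = f (f x y) w) ↔
      (∀ u x y w : A, f u (f (f x y) w) = f (f u (f x y)) w)) ∧
    ((∀ x y w : A, f x (f y w) = f (f x y) w) ↔
      (∀ u x y w : A, f (f u x) (f y w) = f (f u (f x y)) w)) ∧
    ((∀ x y w : A, f x (f y w) = f (f x y) w) ↔
      (∀ u x y w : A, f (f u x) (f y w) = f (f (f u x) y) w)) ∧
    ((∀ x y w : A, f x (f y w) = f (f x y) w) ↔
      (∀ u x y w : A, f (f u (f x y)) w = f (f (f u x) y) w)) := by
  -- injectivity of x ↦ f x z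
  have inj : ∀ a b : A, f a z = f b z → a = b := by
    intro a b h
    rw [← hinv a, h, hinv]
  -- L0 : f (f z z) x = x  ("0' → x = x")
  have L1 : ∀ x y : A, f x y = f (f (f z z) x) y := by
    intro x y
    apply inj
    rw [hI x y z, hinv y]
  have L0 : ∀ x : A, f (f z z) x = x := by
    intro x
    exact (inj _ _ (L1 x z)).symm
  refine ⟨?_, ?_, ?_, ?_, ?_, ?_, ?_, ?_, ?_⟩ <;>
    constructor
  · intro h u x y w; simp only [h]
  · intro h x y w
    have := h (f z z) x y w
    rwa [L0, L0] at this
  · intro h u x y w; simp only [h]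
  · intro h x y w
    have := h x y (f w z) z
    rwa [hinv w] at this
  · intro h u x y w; simp only [h]
  · intro h x y w
    have := h (f z z) x y w
    rwa [L0, L0] at this
  · intro h u x y w; simp only [h]
  · intro h x y w
    have := h (f z z) x y w
    rwa [L0, L0] at this
  · intro h u x y w; simp only [h]
  · intro h x y w
    have := h (f z z) x y w
    rw [L0, L0] at this
    exact this.symm
  · intro h u x y w; simp only [h]
  · intro h x y w
    have := h x (f y z) z w
    rwa [hinv y] at this
  · intro h u x y w; simp only [h]
  · intro h x y w
    have := h (f z z) x y w
    rwa [L0, L0] at this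
  · intro h u x y w; simp only [h]
  · intro h x y w
    have := h (f z z) x y w
    rwa [L0] at this
  · intro h u x y w; simp only [h]
  · intro h u x y
    exact inj _ _ (h u x y z)
end

section
/- Let A be a symmetric implication zroupoid. Then the following conditions are equivalent: (a) A satisfies 0 → x = x for all x; (b) A satisfies (31A12): x → (x → x) = (x → x) → x for all x; (c) A satisfies (43A23): x → ((x → y) → z) = (x → x) → (y → z) for all x, y, z; (d) A satisfies (44A25): u → ((x → y) → z) = ((u → x) → y) → z for all u, x, y, z. Consequently, relative to S, the varieties 31A12, 43A23 and 44A25 coincide. -/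
/-- In a symmetric I-zroupoid, the conditions 0 → x = x, (31A12),
(43A23) and (44A25) are all equivalent. -/
theorem stmt_19 {A : Type*} (f : A → A → A) (z : A)
    (hI : ∀ x y w : A, f (f x y) w = f (f (f (f w z) x) (f (f y w) z)) z)
    (hI0 : f (f z z) z = z)
    (hinv : ∀ x : A, f (f x z) z = x)
    (hsym : ∀ x y : A, f (f x (f y z)) z = f (f y (f x z)) z) :
    ((∀ x : A, f z x = x) ↔ (∀ x : A, f x (f x x) = f (f x x) x)) ∧
    ((∀ x : A, f z x = x) ↔
      (∀ x y w : A, f x (f (f x y) w) = f (f x x) (f y w))) ∧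
    ((∀ x : A, f z x = x) ↔
      (∀ u x y w : A, f u (f (f x y) w) = f (f (f u x) y) w)) := by
  -- prime injectivity
  have hpinj : ∀ a b : A, f a z = f b z → a = b := by
    intro a b h
    rw [← hinv a, h, hinv b]
  -- G1 : x → y' = y → x'
  have hG1 : ∀ x y : A, f x (f y z) = f y (f x z) := by
    intro x y
    calc f x (f y z) = f (f (f x (f y z)) z) z := (hinv _).symm
      _ = f (f (f y (f x z)) z) z := by rw [hsym]
      _ = f y (f x z) := hinv _
  -- G2 : x → y = y' → x'
  have hG2 : ∀ x y : A, f x y = f (f y z) (f x z) := by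
    intro x y
    calc f x y = f x (f (f y z) z) := by rw [hinv]
      _ = f (f y z) (f x z) := hG1 _ _
  -- swap : w' → x = x' → w
  have hswap : ∀ x w : A, f (f w z) x = f (f x z) w := by
    intro x w
    calc f (f w z) x = f (f x z) (f (f w z) z) := hG2 _ _
      _ = f (f x z) w := by rw [hinv w]
  -- Isym : (x→y)→w = ((y→w)→(x'→w)')'
  have hIsym : ∀ x y w : A,
      f (f x y) w = f (f (f y w) (f (f (f x z) w) z)) z := by
    intro x y w
    calc f (f x y) w
        = f (f (f (f w z) x) (f (f y w) z)) z := hI x y w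
      _ = f (f (f y w) (f (f (f w z) x) z)) z := hsym _ _
      _ = f (f (f y w) (f (f (f x z) w) z)) z := by rw [hswap x w]
  -- SL5 : (0→y)→w = (w→(y→w)')'
  have hSL5 : ∀ y w : A, f (f z y) w = f (f w (f (f y w) z)) z := by
    intro y w
    calc f (f z y) w
        = f (f (f (f w z) z) (f (f y w) z)) z := hI z y w
      _ = f (f w (f (f y w) z)) z := by rw [hinv w]
  -- L1 : x→y = (0'→x)→y
  have hL1 : ∀ x y : A, f x y = f (f (f z z) x) y := by
    intro x y
    calc f x y = f (f (f x y) z) z := (hinv _).symm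
      _ = f (f (f (f (f z z) x) (f (f y z) z)) z) z := by rw [hI x y z]
      _ = f (f (f (f (f z z) x) y) z) z := by rw [hinv y]
      _ = f (f (f z z) x) y := hinv _
  -- Laa : 0' → 0' = 0'
  have hLaa : f (f z z) (f z z) = f z z := by
    have h1 : f (f (f z z) (f z z)) z = z := by
      rw [← hL1 (f z z) z, hI0]
    calc f (f z z) (f z z) = f (f (f (f z z) (f z z)) z) z := (hinv _).symm
      _ = f z z := by rw [h1]
  -- the key forward direction: (a) implies everything
  have key : (∀ x : A, f z x = x) →
      (∀ x y w : A, f (f x y) w = f y (f (f x z) w)) ∧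
      (∀ x y w : A, f x (f y w) = f y (f x w)) ∧
      (∀ x y : A, f (f x y) z = f y x) ∧
      (∀ x y : A, f x (f x y) = f x y) ∧
      (∀ x : A, f (f x z) x = x) := by
    intro ha
    -- L5 : y→w = (w→(y→w)')'
    have hL5 : ∀ y w : A, f y w = f (f w (f (f y w) z)) z := by
      intro y w
      have h := hSL5 y w
      rwa [ha y] at h
    -- L6 : x→x' = x'
    have hL6 : ∀ x : A, f x (f x z) = f x z := by
      intro x
      have h := hL5 z x
      rw [ha x] at h
      calc f x (f x z) = f (f (f x (f x z)) z) z := (hinv _).symm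
        _ = f x z := by rw [← h]
    -- L7 : x'→x = x
    have hL7 : ∀ x : A, f (f x z) x = x := by
      intro x
      have h := hL6 (f x z)
      rwa [hinv x] at h
    -- L21 : (x→y)→y' = y→x
    have hL21 : ∀ x y : A, f (f x y) (f y z) = f y x := by
      intro x y
      calc f (f x y) (f y z)
          = f (f (f y (f y z)) (f (f (f x z) (f y z)) z)) z := hIsym x y (f y z)
        _ = f (f (f y z) (f (f (f x z) (f y z)) z)) z := by rw [hL6 y]
        _ = f (f x z) (f y z) := (hL5 (f x z) (f y z)).symm
        _ = f y x := (hG2 y x).symm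
    -- L30 : (x→y)→x = y→x
    have hL30 : ∀ x y : A, f (f x y) x = f y x := by
      intro x y
      have h := hL21 (f y z) (f x z)
      rw [hinv x, ← hG2 x y] at h
      rw [h]
      exact (hG2 y x).symm
    -- L31 : (x→y)→x = (x→y)'
    have hL31 : ∀ x y : A, f (f x y) x = f (f x y) z := by
      intro x y
      calc f (f x y) x
          = f (f (f (f x z) x) (f (f y x) z)) z := hI x y x
        _ = f (f x (f (f y x) z)) z := by rw [hL7 x]
        _ = f (f (f y x) (f x z)) z := hsym x (f y x)
        _ = f (f x y) z := by rw [hL21 y x]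
    -- N : (x→y)' = y→x
    have hN : ∀ x y : A, f (f x y) z = f y x := by
      intro x y
      exact (hL31 x y).symm.trans (hL30 x y)
    -- LI : x→(x→y) = x→y
    have hLI : ∀ x y : A, f x (f x y) = f x y := by
      intro x y
      calc f x (f x y) = f (f (f x y) z) (f x z) := hG2 _ _
        _ = f (f y x) (f x z) := by rw [hN x y]
        _ = f x y := hL21 y x
    -- E1 : (x→y)→(y→w) = (x→y)→w
    have hE1 : ∀ x y w : A, f (f x y) (f y w) = f (f x y) w := by
      intro x y w
      have lhs : f (f x y) (f y w) = f (f w y) x := by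
        calc f (f x y) (f y w)
            = f (f (f (f (f y w) z) x) (f (f y (f y w)) z)) z := hI x y (f y w)
          _ = f (f (f (f w y) x) (f (f y (f y w)) z)) z := by rw [hN y w]
          _ = f (f (f (f w y) x) (f (f y w) z)) z := by rw [hLI y w]
          _ = f (f (f (f w y) x) (f w y)) z := by rw [hN y w]
          _ = f (f x (f w y)) z := by rw [hL30 (f w y) x]
          _ = f (f w y) x := hN _ _
      have mid : f (f (f x z) w) (f w y) = f (f y w) (f x z) := by
        calc f (f (f x z) w) (f w y)
            = f (f (f (f (f w y) z) (f x z)) (f (f w (f w y)) z)) z := hI (f x z) w (f w y)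
          _ = f (f (f (f y w) (f x z)) (f (f w (f w y)) z)) z := by rw [hN w y]
          _ = f (f (f (f y w) (f x z)) (f (f w y) z)) z := by rw [hLI w y]
          _ = f (f (f (f y w) (f x z)) (f y w)) z := by rw [hN w y]
          _ = f (f (f x z) (f y w)) z := by rw [hL30 (f y w) (f x z)]
          _ = f (f y w) (f x z) := hN _ _
      have rhs : f (f x y) w = f (f w y) x := by
        calc f (f x y) w
            = f (f (f (f w z) x) (f (f y w) z)) z := hI x y w
          _ = f (f (f (f w z) x) (f w y)) z := by rw [hN y w]
          _ = f (f (f (f x z) w) (f w y)) z := by rw [hswap x w]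
          _ = f (f (f y w) (f x z)) z := by rw [mid]
          _ = f (f x z) (f y w) := hN _ _
          _ = f (f x z) (f (f w y) z) := by rw [hN w y]
          _ = f (f w y) (f (f x z) z) := hG1 _ _
          _ = f (f w y) x := by rw [hinv x]
      exact lhs.trans rhs.symm
    -- M : (x→y)→w = y→(x'→w)
    have hM : ∀ x y w : A, f (f x y) w = f y (f (f x z) w) := by
      intro x y w
      apply hpinj
      have h1 : f (f (f x y) w) z = f w (f x y) := hN _ _
      have h2 : f (f y (f (f x z) w)) z = f w (f x y) := by
        calc f (f y (f (f x z) w)) z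
            = f (f (f x z) w) y := hN _ _
          _ = f (f (f (f y z) (f x z)) (f (f w y) z)) z := hI (f x z) w y
          _ = f (f (f x y) (f (f w y) z)) z := by rw [← hG2 x y]
          _ = f (f (f x y) (f y w)) z := by rw [hN w y]
          _ = f (f (f x y) w) z := by rw [hE1 x y w]
          _ = f w (f x y) := hN _ _
      exact h1.trans h2.symm
    -- K : x→(y→w) = y→(x→w)
    have hK : ∀ x y w : A, f x (f y w) = f y (f x w) := by
      intro x y w
      have e1 : f (f (f y z) x) w = f x (f y w) := by
        have h := hM (f y z) x w
        rwa [hinv y] at h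
      have e2 : f (f (f x z) y) w = f y (f x w) := by
        have h := hM (f x z) y w
        rwa [hinv x] at h
      calc f x (f y w) = f (f (f y z) x) w := e1.symm
        _ = f (f (f x z) y) w := by rw [hswap x y]
        _ = f y (f x w) := e2
    exact ⟨hM, hK, hN, hLI, hL7⟩
  -- (a) → (b)
  have hab : (∀ x : A, f z x = x) → ∀ x : A, f x (f x x) = f (f x x) x := by
    intro ha x
    obtain ⟨hM, hK, hN, hLI, hL7⟩ := key ha
    calc f x (f x x) = f x x := hLI x x
      _ = f x (f (f x z) x) := by rw [hL7 x]
      _ = f (f x x) x := (hM x x x).symm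
  -- (a) → (c)
  have hac : (∀ x : A, f z x = x) →
      ∀ x y w : A, f x (f (f x y) w) = f (f x x) (f y w) := by
    intro ha x y w
    obtain ⟨hM, hK, hN, hLI, hL7⟩ := key ha
    calc f x (f (f x y) w)
        = f x (f y (f (f x z) w)) := by rw [hM x y w]
      _ = f y (f x (f (f x z) w)) := hK x y _
      _ = f x (f y (f (f x z) w)) := hK y x _
      _ = f x (f (f x z) (f y w)) := by rw [hK y (f x z) w]
      _ = f (f x x) (f y w) := (hM x x (f y w)).symm
  -- (a) → (d)
  have had : (∀ x : A, f z x = x) →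
      ∀ u x y w : A, f u (f (f x y) w) = f (f (f u x) y) w := by
    intro ha u x y w
    obtain ⟨hM, hK, hN, hLI, hL7⟩ := key ha
    calc f u (f (f x y) w)
        = f u (f y (f (f x z) w)) := by rw [hM x y w]
      _ = f y (f u (f (f x z) w)) := hK u y _
      _ = f y (f (f x u) w) := by rw [← hM x u w]
      _ = f y (f (f (f u x) z) w) := by rw [hN u x]
      _ = f (f (f u x) y) w := (hM (f u x) y w).symm
  -- from 0'=0 to (a)
  have haz_of : f z z = z → ∀ x : A, f z x = x := by
    intro haz x
    calc f z x = f (f x z) (f z z) := hG2 z x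
      _ = f (f x z) z := by rw [haz]
      _ = x := hinv x
  -- (b) → (a)
  have hba : (∀ x : A, f x (f x x) = f (f x x) x) → ∀ x : A, f z x = x := by
    intro hb
    apply haz_of
    have h0 : f z (f z z) = z := by
      have h := hb z
      rwa [hI0] at h
    calc f z z = f (f z z) (f z z) := hLaa.symm
      _ = f (f (f z z) (f (f z (f z z)) z)) z := hSL5 z (f z z)
      _ = f (f (f z z) (f z z)) z := by rw [h0]
      _ = f (f z z) z := by rw [hLaa]
      _ = z := hI0
  -- (c) → (a)
  have hca : (∀ x y w : A, f x (f (f x y) w) = f (f x x) (f y w)) →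
      ∀ x : A, f z x = x := by
    intro hc
    apply haz_of
    calc f z z = f (f z z) (f z z) := hLaa.symm
      _ = f z (f (f z z) z) := hG1 (f z z) z
      _ = f z (f (f (f z z) (f z z)) z) := by rw [hLaa]
      _ = f z (f (f (f (f z z) (f (f z (f z z)) z)) z) z) := by rw [hSL5 z (f z z)]
      _ = f z (f (f z z) (f (f z (f z z)) z)) := by rw [hinv]
      _ = f z (f (f z (f z z)) z) := by rw [← hG2 (f z (f z z)) z]
      _ = f (f z z) (f (f z z) z) := hc z (f z z) z
      _ = f (f z z) z := by conv_lhs => rw [hI0]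
      _ = z := hI0
  -- (d) → (a)
  have hda : (∀ u x y w : A, f u (f (f x y) w) = f (f (f u x) y) w) →
      ∀ x : A, f z x = x := by
    intro hd
    apply haz_of
    calc f z z = f (f z z) (f z z) := hLaa.symm
      _ = f z (f (f z z) z) := hG1 (f z z) z
      _ = f z (f (f (f z z) (f z z)) z) := by rw [hLaa]
      _ = f z (f (f (f (f z z) (f (f z (f z z)) z)) z) z) := by rw [hSL5 z (f z z)]
      _ = f z (f (f z z) (f (f z (f z z)) z)) := by rw [hinv]
      _ = f z (f (f z (f z z)) z) := by rw [← hG2 (f z (f z z)) z]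
      _ = f (f (f z z) (f z z)) z := hd z z (f z z) z
      _ = f (f z z) z := by rw [hLaa]
      _ = z := hI0
  exact ⟨⟨hab, hba⟩, ⟨hac, hca⟩, ⟨had, hda⟩⟩
end
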